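/- arXiv:1503.03742 — 4 statements merged into one kernel-verified Lean document; each statement's English description precedes it below -/
import Mathlib

section
/- Let n ≥ 1, let a_1,…,a_n, w_1,…,w_n, u_1,…,u_n be positive integers such that both {(a_i,u_i)}_{i=1}^n and {(w_i,u_i)}_{i=1}^n are superincreasing sequences, and let b, d be positive integers. Let K^≤ = {x ∈ rect(u) : ∑_i a_i x_i ≤ b} and K^≥ = {x ∈ rect(u) : ∑_i w_i x_i ≥ d}. If K^≤ ∩ K^≥ ≠ ∅, then conv(K^≤ ∩ K^≥) = conv(K^≤) ∩ conv(K^≥). -/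
/-- Embedding of integer vectors into real vectors. -/
noncomputable def toReal {n : ℕ} (x : Fin n → ℤ) : Fin n → ℝ := fun i => (x i : ℝ)

/-!
Since the weights are superincreasing, `x ↦ ∑ aᵢ xᵢ` is monotone on the box for the colex order
(last coordinate most significant). Hence `K≤` is the set of box points colex-below its
colex-largest element `c`, `K≥` the set of box points colex-above its colex-smallest element `e`,
and `K≤ ∩ K≥` is the colex interval `[e, c]`.

For colex intervals the equality is proved by induction on the dimension, slicing along the last
coordinate. With `D`, `U`, `F` the hulls of the lower-dimensional down-set, up-set and box, the
slice at height `t` of the hull of the down-set of `c` is `λ • D + (1 - λ) • F` with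
`λ = topWeight cₙ t = max 0 (t - cₙ + 1)`, and symmetrically for up-sets. Intersecting two such
slices calls for the stronger statement
`(α • D + (1 - α) • F) ∩ (β • U + (1 - β) • F) ⊆ α • D + β • U + (1 - α - β) • F` for `α + β ≤ 1`,
which is what the induction carries: a point of the left side in dimension `m + 1` projects to a
point of the same kind in dimension `m`, and its last coordinate can then be split among the three
parts with heights that only lower the weights.
-/

open Set Fin
open scoped Pointwise

section Mixture

variable {E : Type*} [AddCommGroup E] [Module ℝ E] {A B C : Set E}

def mixture (w : ℝ) (A B : Set E) : Set E := w • A + (1 - w) • B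

theorem mixture_zero (hA : A.Nonempty) : mixture 0 A B = B := by
  simp [mixture, zero_smul_set hA]

theorem mixture_one (hB : B.Nonempty) : mixture 1 A B = A := by
  simp [mixture, zero_smul_set hB]

theorem mem_of_mem_mixture_zero {y : E} (h : y ∈ mixture 0 A B) : y ∈ B := by
  obtain ⟨_, ⟨a, -, rfl⟩, _, ⟨b, hb, rfl⟩, rfl⟩ := h
  simpa using hb

theorem mem_of_mem_mixture_one {y : E} (h : y ∈ mixture 1 A B) : y ∈ A := by
  obtain ⟨_, ⟨a, ha, rfl⟩, _, ⟨b, -, rfl⟩, rfl⟩ := h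
  simpa using ha

theorem mixture_subset_mixture (hAB : A ⊆ B) (hB : Convex ℝ B) {w w' : ℝ}
    (hw : w' ≤ w) (hw1 : w ≤ 1) : mixture w A B ⊆ mixture w' A B := by
  rintro _ ⟨_, ⟨a, ha, rfl⟩, _, ⟨b, hb, rfl⟩, rfl⟩
  have hrest : (w - w') • a + (1 - w) • b ∈ (1 - w') • B := by
    rw [show 1 - w' = (w - w') + (1 - w) by ring, hB.add_smul (by linarith) (by linarith)]
    exact add_mem_add (smul_mem_smul_set (hAB ha)) (smul_mem_smul_set hb)
  refine ⟨w' • a, smul_mem_smul_set ha, _, hrest, ?_⟩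
  module

theorem smul_add_smul_mem_mixture (hA : Convex ℝ A) (hB : Convex ℝ B) {θ w₁ w₂ : ℝ}
    (hθ₀ : 0 ≤ θ) (hθ₁ : θ ≤ 1) (hw₁₀ : 0 ≤ w₁) (hw₁₁ : w₁ ≤ 1) (hw₂₀ : 0 ≤ w₂) (hw₂₁ : w₂ ≤ 1)
    {y₁ y₂ : E} (hy₁ : y₁ ∈ mixture w₁ A B) (hy₂ : y₂ ∈ mixture w₂ A B) :
    θ • y₁ + (1 - θ) • y₂ ∈ mixture (θ * w₁ + (1 - θ) * w₂) A B := by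
  obtain ⟨_, ⟨a₁, ha₁, rfl⟩, _, ⟨b₁, hb₁, rfl⟩, rfl⟩ := hy₁
  obtain ⟨_, ⟨a₂, ha₂, rfl⟩, _, ⟨b₂, hb₂, rfl⟩, rfl⟩ := hy₂
  have hθ' : 0 ≤ 1 - θ := by linarith
  have hA' : (θ * w₁) • a₁ + ((1 - θ) * w₂) • a₂ ∈ (θ * w₁ + (1 - θ) * w₂) • A := by
    rw [hA.add_smul (by positivity) (by positivity)]
    exact add_mem_add (smul_mem_smul_set ha₁) (smul_mem_smul_set ha₂)
  have hB' : (θ * (1 - w₁)) • b₁ + ((1 - θ) * (1 - w₂)) • b₂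
      ∈ (1 - (θ * w₁ + (1 - θ) * w₂)) • B := by
    rw [show 1 - (θ * w₁ + (1 - θ) * w₂) = θ * (1 - w₁) + (1 - θ) * (1 - w₂) by ring,
      hB.add_smul (mul_nonneg hθ₀ (by linarith)) (mul_nonneg hθ' (by linarith))]
    exact add_mem_add (smul_mem_smul_set hb₁) (smul_mem_smul_set hb₂)
  refine ⟨_, hA', _, hB', ?_⟩
  module

theorem smul_add_smul_mem_mixture_mul (hA : Convex ℝ A) (hB : Convex ℝ B) {θ w : ℝ}
    (hθ₀ : 0 ≤ θ) (hθ₁ : θ ≤ 1) (hw₀ : 0 ≤ w) (hw₁ : w ≤ 1) {y₁ y₂ : E}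
    (hy₁ : y₁ ∈ mixture w A B) (hy₂ : y₂ ∈ B) : θ • y₁ + (1 - θ) • y₂ ∈ mixture (θ * w) A B := by
  obtain ⟨_, ⟨a, ha, -⟩, -⟩ := id hy₁
  have := smul_add_smul_mem_mixture hA hB hθ₀ hθ₁ hw₀ hw₁ le_rfl zero_le_one hy₁
    (by rwa [mixture_zero ⟨a, ha⟩])
  simpa using this

theorem mem_smul_mixture_add_smul_mixture (hAB : A ⊆ B) (hCB : C ⊆ B) (hB : Convex ℝ B)
    {x y α β μ ν : ℝ} (hx : α * μ ≤ x) (hy : β * ν ≤ y) (hxy : x + y ≤ 1) {q : E}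
    (hq : q ∈ x • A + y • C + (1 - x - y) • B) :
    q ∈ α • mixture μ A B + β • mixture ν C B + (1 - α - β) • B := by
  obtain ⟨_, ⟨_, ⟨a, ha, rfl⟩, _, ⟨c, hc, rfl⟩, rfl⟩, _, ⟨b, hb, rfl⟩, rfl⟩ := hq
  have hrest : (x - α * μ) • a + (y - β * ν) • c + (1 - x - y) • b ∈
      (1 - α * μ - β * ν) • B := by
    rw [show 1 - α * μ - β * ν = (x - α * μ) + (y - β * ν) + (1 - x - y) by ring,
      hB.add_smul (by linarith) (by linarith), hB.add_smul (by linarith) (by linarith)]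
    exact add_mem_add (add_mem_add (smul_mem_smul_set (hAB ha)) (smul_mem_smul_set (hCB hc)))
      (smul_mem_smul_set hb)
  obtain ⟨b', hb', hb'eq⟩ := hrest
  refine ⟨_, ⟨_, smul_mem_smul_set (add_mem_add (smul_mem_smul_set ha) (smul_mem_smul_set hb')),
    _, smul_mem_smul_set (add_mem_add (smul_mem_smul_set hc) (smul_mem_smul_set hb')), rfl⟩,
    _, smul_mem_smul_set hb', ?_⟩
  linear_combination (norm := module) hb'eq

end Mixture

namespace Fin

variable {m : ℕ} {α : Type*}

theorem snoc_add_snoc [Add α] (x y : Fin m → α) (a b : α) :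
    (snoc x a : Fin (m + 1) → α) + snoc y b = snoc (x + y) (a + b) := by
  ext j
  induction j using lastCases <;> simp

theorem smul_snoc {R : Type*} [SMul R α] (r : R) (x : Fin m → α) (a : α) :
    r • (snoc x a : Fin (m + 1) → α) = snoc (r • x) (r • a) := by
  ext j
  induction j using lastCases <;> simp

end Fin

section IntHull

variable {m : ℕ}

theorem toReal_snoc (x : Fin m → ℤ) (i : ℤ) :
    toReal (snoc x i : Fin (m + 1) → ℤ) = snoc (toReal x) (i : ℝ) := by
  ext j
  induction j using lastCases <;> simp [toReal]

theorem toReal_last (x : Fin (m + 1) → ℤ) : toReal x (last m) = x (last m) := rfl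

def intHull (S : Set (Fin m → ℤ)) : Set (Fin m → ℝ) := convexHull ℝ (toReal '' S)

theorem convex_intHull (S : Set (Fin m → ℤ)) : Convex ℝ (intHull S) := convex_convexHull ℝ _

theorem toReal_mem_intHull {S : Set (Fin m → ℤ)} {x : Fin m → ℤ} (hx : x ∈ S) :
    toReal x ∈ intHull S :=
  subset_convexHull ℝ _ (mem_image_of_mem _ hx)

theorem intHull_mono {S T : Set (Fin m → ℤ)} (h : S ⊆ T) : intHull S ⊆ intHull T :=
  convexHull_mono (image_mono h)

theorem intHull_nonempty {S : Set (Fin m → ℤ)} (h : S.Nonempty) : (intHull S).Nonempty :=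
  (h.image toReal).mono (subset_convexHull ℝ _)

theorem snoc_mem_intHull {S' : Set (Fin m → ℤ)} {S : Set (Fin (m + 1) → ℤ)} {a b : ℤ}
    (hS : ∀ x ∈ S', snoc x a ∈ S ∧ snoc x b ∈ S) {q : Fin m → ℝ} (hq : q ∈ intHull S')
    {t : ℝ} (ht : t ∈ Icc (a : ℝ) b) : (snoc q t : Fin (m + 1) → ℝ) ∈ intHull S := by
  have hconv : Convex ℝ {q : Fin m → ℝ | (snoc q t : Fin (m + 1) → ℝ) ∈ intHull S} := by
    intro q₁ hq₁ q₂ hq₂ r s hr hs hrs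
    have := convex_intHull S hq₁ hq₂ hr hs hrs
    simpa [Fin.smul_snoc, Fin.snoc_add_snoc, ← add_mul, hrs] using this
  refine convexHull_min ?_ hconv hq
  rintro _ ⟨x, hx, rfl⟩
  rw [← segment_eq_Icc (ht.1.trans ht.2)] at ht
  obtain ⟨θ, η, hθ, hη, hθη, rfl⟩ := ht
  have := convex_intHull S (toReal_mem_intHull (hS x hx).1) (toReal_mem_intHull (hS x hx).2)
    hθ hη hθη
  simpa [toReal_snoc, Fin.smul_snoc, Fin.snoc_add_snoc, ← add_smul, hθη] using this

end IntHull

section Weights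

def topWeight (k : ℤ) (t : ℝ) : ℝ := max 0 (t - k + 1)

def botWeight (l : ℤ) (t : ℝ) : ℝ := max 0 (l + 1 - t)

variable {k l : ℤ} {t t' : ℝ}

theorem topWeight_nonneg : 0 ≤ topWeight k t := le_max_left _ _

theorem topWeight_le_one (h : t ≤ k) : topWeight k t ≤ 1 := max_le zero_le_one (by linarith)

theorem topWeight_of_le (h : t ≤ k - 1) : topWeight k t = 0 := max_eq_left (by linarith)

theorem topWeight_of_lt (h : k - 1 < t) : topWeight k t = t - k + 1 := max_eq_right (by linarith)

theorem topWeight_self : topWeight k k = 1 := by simp [topWeight]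

theorem topWeight_mono (h : t' ≤ t) : topWeight k t' ≤ topWeight k t :=
  max_le_max le_rfl (by linarith)

theorem convexOn_topWeight : ConvexOn ℝ univ (topWeight k) := by
  refine ⟨convex_univ, fun x _ y _ a b ha hb hab => ?_⟩
  have hx := mul_le_mul_of_nonneg_left (le_max_right 0 (x - k + 1)) ha
  have hy := mul_le_mul_of_nonneg_left (le_max_right 0 (y - k + 1)) hb
  simp only [topWeight, smul_eq_mul] at hx hy ⊢
  refine max_le (add_nonneg (mul_nonneg ha (le_max_left _ _)) (mul_nonneg hb (le_max_left _ _))) ?_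
  linear_combination hx + hy - (1 - (k : ℝ)) * hab

theorem botWeight_nonneg : 0 ≤ botWeight l t := le_max_left _ _

theorem botWeight_le_one (h : l ≤ t) : botWeight l t ≤ 1 := max_le zero_le_one (by linarith)

theorem botWeight_of_le (h : l + 1 ≤ t) : botWeight l t = 0 := max_eq_left (by linarith)

theorem botWeight_of_lt (h : t < l + 1) : botWeight l t = l + 1 - t := max_eq_right (by linarith)

theorem botWeight_self : botWeight l l = 1 := by simp [botWeight]

theorem botWeight_anti (h : t ≤ t') : botWeight l t' ≤ botWeight l t :=
  max_le_max le_rfl (by linarith)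

theorem convexOn_botWeight : ConvexOn ℝ univ (botWeight l) := by
  refine ⟨convex_univ, fun x _ y _ a b ha hb hab => ?_⟩
  have hx := mul_le_mul_of_nonneg_left (le_max_right 0 (l + 1 - x)) ha
  have hy := mul_le_mul_of_nonneg_left (le_max_right 0 (l + 1 - y)) hb
  simp only [botWeight, smul_eq_mul] at hx hy ⊢
  refine max_le (add_nonneg (mul_nonneg ha (le_max_left _ _)) (mul_nonneg hb (le_max_left _ _))) ?_
  linear_combination hx + hy - ((l : ℝ) + 1) * hab

theorem topWeight_add_botWeight_le (hlk : l < k) (ht : t ∈ Icc (l : ℝ) k) :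
    topWeight k t + botWeight l t ≤ 1 := by
  have hlk' : (l : ℝ) + 1 ≤ k := by exact_mod_cast hlk
  rcases le_or_gt t (k - 1) with h | h
  · rw [topWeight_of_le h, zero_add]; exact botWeight_le_one ht.1
  rcases le_or_gt ((l : ℝ) + 1) t with h' | h'
  · rw [botWeight_of_le h', add_zero]; exact topWeight_le_one ht.2
  rw [topWeight_of_lt h, botWeight_of_lt h']
  linarith

theorem exists_mul_add_mul_add_mul_eq {α β t t₁ t₃ N : ℝ} (ht₁ : 0 ≤ t₁) (ht₃ : t₃ ∈ Icc 0 N)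
    (hlo : β * t₃ ≤ t)     (hhi : t ≤ α * t₁ + (1 - α) * N) :
    ∃ s₁ ∈ Icc 0 t₁, ∃ s₃ ∈ Icc t₃ N, ∃ s ∈ Icc 0 N, α * s₁ + β * s₃ + (1 - α - β) * s = t := by
  have ht : t ∈ segment ℝ (β * t₃) (α * t₁ + (1 - α) * N) := by
    rw [segment_eq_Icc (hlo.trans hhi)]; exact ⟨hlo, hhi⟩
  obtain ⟨a, b, ha, hb, hab, rfl⟩ := ht
  have hN : 0 ≤ N := ht₃.1.trans ht₃.2
  have hN₃ : 0 ≤ N - t₃ := sub_nonneg.2 ht₃.2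
  refine ⟨b * t₁, ⟨by positivity, by nlinarith⟩, a * t₃ + b * N,
    ⟨by nlinarith [mul_nonneg hb hN₃], by nlinarith [mul_nonneg ha hN₃]⟩,
    b * N, ⟨by positivity, by nlinarith⟩, ?_⟩
  simp only [smul_eq_mul]
  ring

end Weights

section Fibers

variable {m : ℕ}

def fiberMixture (lo hi : ℝ) (w : ℝ → ℝ) (A B : Set (Fin m → ℝ)) : Set (Fin (m + 1) → ℝ) :=
  {p | p (last m) ∈ Icc lo hi ∧ init p ∈ mixture (w (p (last m))) A B}

theorem convex_fiberMixture {lo hi : ℝ} {w : ℝ → ℝ} {A B : Set (Fin m → ℝ)} (hA : Convex ℝ A)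
    (hB : Convex ℝ B) (hAB : A ⊆ B) (hw : ConvexOn ℝ univ w)
    (hw01 : ∀ t ∈ Icc lo hi, 0 ≤ w t ∧ w t ≤ 1) : Convex ℝ (fiberMixture lo hi w A B) := by
  rintro p ⟨hp, hp'⟩ p' ⟨hq, hq'⟩ θ η hθ hη hθη
  obtain rfl : η = 1 - θ := by linarith
  have ht : θ * p (last m) + (1 - θ) * p' (last m) ∈ Icc lo hi :=
    convex_Icc lo hi hp hq hθ hη (by ring)
  refine ⟨ht, ?_⟩
  have hmix := smul_add_smul_mem_mixture hA hB hθ (by linarith) (hw01 _ hp).1 (hw01 _ hp).2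
    (hw01 _ hq).1 (hw01 _ hq).2 hp' hq'
  refine mixture_subset_mixture hAB hB ?_ ?_ hmix
  · simpa using hw.2 (mem_univ _) (mem_univ _) hθ hη (by ring)
  · nlinarith [(hw01 _ hp).2, (hw01 _ hq).2]

theorem intHull_subset_fiberMixture {S : Set (Fin (m + 1) → ℤ)} {lo hi : ℝ} {w : ℝ → ℝ}
    {A B : Set (Fin m → ℝ)} (hA : Convex ℝ A) (hB : Convex ℝ B) (hAB : A ⊆ B)
    (hw : ConvexOn ℝ univ w) (hw01 : ∀ t ∈ Icc lo hi, 0 ≤ w t ∧ w t ≤ 1)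
    (hS : toReal '' S ⊆ fiberMixture lo hi w A B) : intHull S ⊆ fiberMixture lo hi w A B :=
  convexHull_min hS (convex_fiberMixture hA hB hAB hw hw01)

theorem snoc_mem_intHull_of_topWeight {S : Set (Fin (m + 1) → ℤ)} {A' B' : Set (Fin m → ℤ)}
    {lo j : ℤ} (hA : ∀ x ∈ A', snoc x j ∈ S) (hB : ∀ x ∈ B', ∀ i, lo ≤ i → i ≤ j - 1 → snoc x i ∈ S)
    {t : ℝ} (ht : t ∈ Icc (lo : ℝ) j) {q : Fin m → ℝ}
    (hq : q ∈ mixture (topWeight j t) (intHull A') (intHull B')) :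
    (snoc q t : Fin (m + 1) → ℝ) ∈ intHull S := by
  rcases le_or_gt t (j - 1) with h | h
  · rw [topWeight_of_le h] at hq
    have hlo : lo ≤ j - 1 := by exact_mod_cast ht.1.trans h
    exact snoc_mem_intHull (fun x hx => ⟨hB x hx lo le_rfl hlo, hB x hx (j - 1) hlo le_rfl⟩)
      (mem_of_mem_mixture_zero hq) ⟨ht.1, by push_cast; exact h⟩
  rcases ht.2.eq_or_lt with rfl | hlt
  · rw [topWeight_self] at hq
    exact snoc_mem_intHull (fun x hx => ⟨hA x hx, hA x hx⟩) (mem_of_mem_mixture_one hq)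
      ⟨le_rfl, le_rfl⟩
  have hlo : lo ≤ j - 1 := by
    have : (lo : ℝ) < j := ht.1.trans_lt hlt
    have : lo < j := by exact_mod_cast this
    omega
  rw [topWeight_of_lt h] at hq
  obtain ⟨_, ⟨a, ha, rfl⟩, _, ⟨b, hb, rfl⟩, rfl⟩ := hq
  have key := convex_intHull S
    (snoc_mem_intHull (fun x hx => ⟨hA x hx, hA x hx⟩) ha ⟨le_rfl, le_rfl⟩)
    (snoc_mem_intHull (fun x hx => ⟨hB x hx _ hlo le_rfl, hB x hx _ hlo le_rfl⟩) hb
      ⟨le_rfl, le_rfl⟩) (by linarith : (0 : ℝ) ≤ t - j + 1)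
    (by linarith : (0 : ℝ) ≤ 1 - (t - j + 1)) (by ring)
  rw [Fin.smul_snoc, Fin.smul_snoc, Fin.snoc_add_snoc] at key
  convert key using 2
  simp only [smul_eq_mul]; push_cast; ring

theorem snoc_mem_intHull_of_botWeight {S : Set (Fin (m + 1) → ℤ)} {A' B' : Set (Fin m → ℤ)}
    {j hi : ℤ} (hA : ∀ x ∈ A', snoc x j ∈ S) (hB : ∀ x ∈ B', ∀ i, j + 1 ≤ i → i ≤ hi → snoc x i ∈ S)
    {t : ℝ} (ht : t ∈ Icc (j : ℝ) hi) {q : Fin m → ℝ}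
    (hq : q ∈ mixture (botWeight j t) (intHull A') (intHull B')) :
    (snoc q t : Fin (m + 1) → ℝ) ∈ intHull S := by
  rcases le_or_gt ((j : ℝ) + 1) t with h | h
  · rw [botWeight_of_le h] at hq
    have hhi : j + 1 ≤ hi := by exact_mod_cast h.trans ht.2
    exact snoc_mem_intHull (fun x hx => ⟨hB x hx _ le_rfl hhi, hB x hx hi hhi le_rfl⟩)
      (mem_of_mem_mixture_zero hq) ⟨by push_cast; exact h, ht.2⟩
  rcases ht.1.eq_or_lt with rfl | hlt
  · rw [botWeight_self] at hq
    exact snoc_mem_intHull (fun x hx => ⟨hA x hx, hA x hx⟩) (mem_of_mem_mixture_one hq)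
      ⟨le_rfl, le_rfl⟩
  have hhi : j + 1 ≤ hi := by
    have : (j : ℝ) < hi := hlt.trans_le ht.2
    have : j < hi := by exact_mod_cast this
    omega
  rw [botWeight_of_lt h] at hq
  obtain ⟨_, ⟨a, ha, rfl⟩, _, ⟨b, hb, rfl⟩, rfl⟩ := hq
  have key := convex_intHull S
    (snoc_mem_intHull (fun x hx => ⟨hA x hx, hA x hx⟩) ha ⟨le_rfl, le_rfl⟩)
    (snoc_mem_intHull (fun x hx => ⟨hB x hx _ le_rfl hhi, hB x hx _ le_rfl hhi⟩) hb
      ⟨le_rfl, le_rfl⟩) (by linarith : (0 : ℝ) ≤ j + 1 - t)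
    (by linarith : (0 : ℝ) ≤ 1 - (j + 1 - t)) (by ring)
  rw [Fin.smul_snoc, Fin.smul_snoc, Fin.snoc_add_snoc] at key
  convert key using 2
  simp only [smul_eq_mul]; push_cast; ring

end Fibers

section LexSets

variable {m : ℕ}

def box (u : Fin m → ℤ) : Set (Fin m → ℤ) := {x | ∀ i, 0 ≤ x i ∧ x i ≤ u i}

def lexBelow (u c : Fin m → ℤ) : Set (Fin m → ℤ) := {x | x ∈ box u ∧ toColex x ≤ toColex c}

def lexAbove (u e : Fin m → ℤ) : Set (Fin m → ℤ) := {x | x ∈ box u ∧ toColex e ≤ toColex x}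

def lexBetween (u e c : Fin m → ℤ) : Set (Fin m → ℤ) :=
  {x | x ∈ box u ∧ toColex e ≤ toColex x ∧ toColex x ≤ toColex c}

theorem toColex_le_toColex_iff_last {x y : Fin (m + 1) → ℤ} :
    toColex x ≤ toColex y ↔ x (last m) < y (last m) ∨
      x (last m) = y (last m) ∧ toColex (init x) ≤ toColex (init y) := by
  simp only [le_iff_lt_or_eq, toColex_inj]
  constructor
  · rintro (⟨i, hi, hlt⟩ | rfl)
    · induction i using Fin.lastCases with
      | last => exact Or.inl hlt
      | cast i =>
        refine Or.inr ⟨hi _ (castSucc_lt_last i), Or.inl ⟨i, fun j hj => hi _ ?_, hlt⟩⟩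
        exact castSucc_lt_castSucc_iff.mpr hj
    · exact Or.inr ⟨rfl, Or.inr rfl⟩
  · rintro (hlt | ⟨heq, ⟨i, hi, hlt⟩ | hinit⟩)
    · exact Or.inl ⟨last m, fun j hj => absurd hj (not_lt.mpr (le_last j)), hlt⟩
    · refine Or.inl ⟨i.castSucc, fun j hj => ?_, hlt⟩
      induction j using Fin.lastCases with
      | last => exact heq
      | cast j => exact hi j (castSucc_lt_castSucc_iff.mp hj)
    · right
      rw [← snoc_init_self x, ← snoc_init_self y, heq, hinit]

theorem toColex_snoc_le_iff {x : Fin m → ℤ} {i : ℤ} {y : Fin (m + 1) → ℤ} :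
    toColex (snoc x i : Fin (m + 1) → ℤ) ≤ toColex y ↔
      i < y (last m) ∨ i = y (last m) ∧ toColex x ≤ toColex (init y) := by
  simp [toColex_le_toColex_iff_last]

theorem le_toColex_snoc_iff {x : Fin m → ℤ} {i : ℤ} {y : Fin (m + 1) → ℤ} :
    toColex y ≤ toColex (snoc x i : Fin (m + 1) → ℤ) ↔
      y (last m) < i ∨ y (last m) = i ∧ toColex (init y) ≤ toColex x := by
  simp [toColex_le_toColex_iff_last]

theorem snoc_mem_box_iff {x : Fin m → ℤ} {i : ℤ} {u : Fin (m + 1) → ℤ} :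
    (snoc x i : Fin (m + 1) → ℤ) ∈ box u ↔ x ∈ box (init u) ∧ 0 ≤ i ∧ i ≤ u (last m) := by
  simp [box, forall_fin_succ', init]

theorem init_mem_box {u x : Fin (m + 1) → ℤ} (hx : x ∈ box u) : init x ∈ box (init u) :=
  fun i => hx i.castSucc

theorem lexBelow_subset_box (u c : Fin m → ℤ) : lexBelow u c ⊆ box u := fun _ hx => hx.1

theorem lexAbove_subset_box (u e : Fin m → ℤ) : lexAbove u e ⊆ box u := fun _ hx => hx.1

theorem mem_lexBelow_self {u c : Fin m → ℤ} (hc : c ∈ box u) : c ∈ lexBelow u c := ⟨hc, le_rfl⟩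

theorem mem_lexAbove_self {u e : Fin m → ℤ} (he : e ∈ box u) : e ∈ lexAbove u e := ⟨he, le_rfl⟩

theorem lexBetween_subset_lexBelow {u e c : Fin m → ℤ} : lexBetween u e c ⊆ lexBelow u c :=
  fun _ hx => ⟨hx.1, hx.2.2⟩

theorem lexBetween_subset_lexAbove {u e c : Fin m → ℤ} : lexBetween u e c ⊆ lexAbove u e :=
  fun _ hx => ⟨hx.1, hx.2.1⟩

theorem lexBelow_inter_lexAbove (u e c : Fin m → ℤ) :
    lexBelow u c ∩ lexAbove u e = lexBetween u e c := by
  ext x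
  simp only [lexBelow, lexAbove, lexBetween, mem_inter_iff, mem_ofPred_eq]
  tauto

end LexSets

section Layers

variable {m : ℕ} {u c e : Fin (m + 1) → ℤ}

theorem intHull_lexBelow_subset (hc : c ∈ box u) :
    intHull (lexBelow u c) ⊆ fiberMixture 0 (c (last m)) (topWeight (c (last m)))
      (intHull (lexBelow (init u) (init c))) (intHull (box (init u))) := by
  refine intHull_subset_fiberMixture (convex_intHull _) (convex_intHull _)
    (intHull_mono (lexBelow_subset_box _ _)) convexOn_topWeight
    (fun t ht => ⟨topWeight_nonneg, topWeight_le_one ht.2⟩) ?_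
  rintro _ ⟨x, hx, rfl⟩
  obtain ⟨x, i, rfl⟩ : ∃ (y : Fin m → ℤ) (i : ℤ), x = snoc y i :=
    ⟨init x, _, (snoc_init_self x).symm⟩
  simp only [lexBelow, mem_ofPred_eq, snoc_mem_box_iff, toColex_snoc_le_iff] at hx
  obtain ⟨⟨hx, hi0, -⟩, hi | ⟨rfl, hxc⟩⟩ := hx
  · have hi' : (i : ℝ) ≤ c (last m) - 1 := by exact_mod_cast Int.le_sub_one_of_lt hi
    refine ⟨by
      simp only [toReal_snoc, snoc_last, mem_Icc, Int.cast_nonneg_iff, Int.cast_le]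
      constructor <;> linarith, ?_⟩
    simp only [toReal_snoc, init_snoc, snoc_last, topWeight_of_le hi',
      mixture_zero (intHull_nonempty ⟨_, mem_lexBelow_self (init_mem_box hc)⟩)]
    exact toReal_mem_intHull hx
  · refine ⟨by simp [toReal_snoc, hi0], ?_⟩
    simp only [toReal_snoc, init_snoc, snoc_last, topWeight_self,
      mixture_one (intHull_nonempty ⟨_, hx⟩)]
    exact toReal_mem_intHull ⟨hx, hxc⟩

theorem intHull_lexAbove_subset (he : e ∈ box u) :
    intHull (lexAbove u e) ⊆ fiberMixture (e (last m)) (u (last m)) (botWeight (e (last m)))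
      (intHull (lexAbove (init u) (init e))) (intHull (box (init u))) := by
  refine intHull_subset_fiberMixture (convex_intHull _) (convex_intHull _)
    (intHull_mono (lexAbove_subset_box _ _)) convexOn_botWeight
    (fun t ht => ⟨botWeight_nonneg, botWeight_le_one ht.1⟩) ?_
  rintro _ ⟨x, hx, rfl⟩
  obtain ⟨x, i, rfl⟩ : ∃ (y : Fin m → ℤ) (i : ℤ), x = snoc y i :=
    ⟨init x, _, (snoc_init_self x).symm⟩
  simp only [lexAbove, mem_ofPred_eq, snoc_mem_box_iff, le_toColex_snoc_iff] at hx
  obtain ⟨⟨hx, -, hiu⟩, hi | ⟨rfl, hex⟩⟩ := hx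
  · have hi' : (e (last m) : ℝ) + 1 ≤ i := by exact_mod_cast hi
    refine ⟨by
      simp only [toReal_snoc, snoc_last, mem_Icc, Int.cast_le]
      constructor <;> linarith, ?_⟩
    simp only [toReal_snoc, init_snoc, snoc_last, botWeight_of_le hi',
      mixture_zero (intHull_nonempty ⟨_, mem_lexAbove_self (init_mem_box he)⟩)]
    exact toReal_mem_intHull hx
  · refine ⟨by simp [toReal_snoc, hiu], ?_⟩
    simp only [toReal_snoc, init_snoc, snoc_last, botWeight_self,
      mixture_one (intHull_nonempty ⟨_, hx⟩)]
    exact toReal_mem_intHull ⟨hx, hex⟩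

theorem intHull_box_subset :
    intHull (box u) ⊆ fiberMixture 0 (u (last m)) (fun _ => 0)
      (intHull (box (init u))) (intHull (box (init u))) := by
  refine intHull_subset_fiberMixture (convex_intHull _) (convex_intHull _) subset_rfl
    (convexOn_const 0 convex_univ) (fun _ _ => ⟨le_rfl, zero_le_one⟩) ?_
  rintro _ ⟨x, hx, rfl⟩
  refine ⟨by rw [mem_Icc, toReal_last]; exact_mod_cast hx (last m), ?_⟩
  rw [mixture_zero (intHull_nonempty ⟨_, init_mem_box hx⟩)]
  exact toReal_mem_intHull (init_mem_box hx)

theorem snoc_mem_intHull_lexBelow (hc : c ∈ box u) {t : ℝ} (ht : t ∈ Icc 0 (c (last m) : ℝ))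
    {q : Fin m → ℝ} (hq : q ∈ mixture (topWeight (c (last m)) t)
      (intHull (lexBelow (init u) (init c))) (intHull (box (init u)))) :
    (snoc q t : Fin (m + 1) → ℝ) ∈ intHull (lexBelow u c) := by
  refine snoc_mem_intHull_of_topWeight (lo := 0) (fun x hx => ?_) (fun x hx i hi0 hi => ?_)
    (by exact_mod_cast ht) hq
  · exact ⟨snoc_mem_box_iff.2 ⟨hx.1, hc (last m)⟩, toColex_snoc_le_iff.2 (Or.inr ⟨rfl, hx.2⟩)⟩
  · exact ⟨snoc_mem_box_iff.2 ⟨hx, hi0, by linarith [(hc (last m)).2]⟩,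
      toColex_snoc_le_iff.2 (Or.inl (by omega))⟩

theorem snoc_mem_intHull_lexAbove (he : e ∈ box u) {t : ℝ}
    (ht : t ∈ Icc (e (last m) : ℝ) (u (last m))) {q : Fin m → ℝ}
    (hq : q ∈ mixture (botWeight (e (last m)) t)
      (intHull (lexAbove (init u) (init e))) (intHull (box (init u)))) :
    (snoc q t : Fin (m + 1) → ℝ) ∈ intHull (lexAbove u e) := by
  refine snoc_mem_intHull_of_botWeight (fun x hx => ?_) (fun x hx i hi hiu => ?_) ht hq
  · exact ⟨snoc_mem_box_iff.2 ⟨hx.1, he (last m)⟩, le_toColex_snoc_iff.2 (Or.inr ⟨rfl, hx.2⟩)⟩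
  · exact ⟨snoc_mem_box_iff.2 ⟨hx, by linarith [(he (last m)).1], hiu⟩,
      le_toColex_snoc_iff.2 (Or.inl (by omega))⟩

theorem snoc_mem_intHull_box {q : Fin m → ℝ} (hq : q ∈ intHull (box (init u))) {t : ℝ}
    (ht : t ∈ Icc 0 (u (last m) : ℝ)) : (snoc q t : Fin (m + 1) → ℝ) ∈ intHull (box u) := by
  have hu : 0 ≤ u (last m) := by exact_mod_cast ht.1.trans ht.2
  exact snoc_mem_intHull (a := 0) (b := u (last m))
    (fun x hx => ⟨snoc_mem_box_iff.2 ⟨hx, le_rfl, hu⟩, snoc_mem_box_iff.2 ⟨hx, hu, le_rfl⟩⟩)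
    hq (by exact_mod_cast ht)

end Layers

section Slices

variable {m : ℕ} {u c e : Fin (m + 1) → ℤ}

theorem exists_init_mem_mixture_of_mem_lexBelow (hc : c ∈ box u) {α : ℝ} (hα₀ : 0 ≤ α)
    (hα₁ : α ≤ 1) {p : Fin (m + 1) → ℝ}
    (hp : p ∈ mixture α (intHull (lexBelow u c)) (intHull (box u))) :
    ∃ t ∈ Icc 0 (c (last m) : ℝ), p (last m) ≤ α * t + (1 - α) * u (last m) ∧
      init p ∈ mixture (α * topWeight (c (last m)) t)
        (intHull (lexBelow (init u) (init c))) (intHull (box (init u))) := by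
  obtain ⟨_, ⟨d, hd, rfl⟩, _, ⟨f, hf, rfl⟩, rfl⟩ := hp
  obtain ⟨hdt, hd⟩ := intHull_lexBelow_subset hc hd
  obtain ⟨hft, hf⟩ := intHull_box_subset hf
  refine ⟨d (last m), hdt, ?_, ?_⟩
  · simpa using mul_le_mul_of_nonneg_left hft.2 (by linarith : 0 ≤ 1 - α)
  · exact smul_add_smul_mem_mixture_mul (convex_intHull _) (convex_intHull _) hα₀ hα₁
      topWeight_nonneg (topWeight_le_one hdt.2) hd (mem_of_mem_mixture_zero hf)

theorem exists_init_mem_mixture_of_mem_lexAbove (he : e ∈ box u) {β : ℝ} (hβ₀ : 0 ≤ β)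
    (hβ₁ : β ≤ 1) {p : Fin (m + 1) → ℝ}
    (hp : p ∈ mixture β (intHull (lexAbove u e)) (intHull (box u))) :
    ∃ t ∈ Icc (e (last m) : ℝ) (u (last m)), β * t ≤ p (last m) ∧
      init p ∈ mixture (β * botWeight (e (last m)) t)
        (intHull (lexAbove (init u) (init e))) (intHull (box (init u))) := by
  obtain ⟨_, ⟨v, hv, rfl⟩, _, ⟨f, hf, rfl⟩, rfl⟩ := hp
  obtain ⟨hvt, hv⟩ := intHull_lexAbove_subset he hv
  obtain ⟨hft, hf⟩ := intHull_box_subset hf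
  refine ⟨v (last m), hvt, ?_, ?_⟩
  · simpa using mul_nonneg (by linarith : 0 ≤ 1 - β) hft.1
  · exact smul_add_smul_mem_mixture_mul (convex_intHull _) (convex_intHull _) hβ₀ hβ₁
      botWeight_nonneg (botWeight_le_one hvt.1) hv (mem_of_mem_mixture_zero hf)

theorem snoc_mem_smul_add_smul_add_smul (hc : c ∈ box u) (he : e ∈ box u) {α β t₁ t₃ s : ℝ}
    (ht₁ : t₁ ∈ Icc 0 (c (last m) : ℝ)) (ht₃ : t₃ ∈ Icc (e (last m) : ℝ) (u (last m)))
    (hs : s ∈ Icc 0 (u (last m) : ℝ)) {q : Fin m → ℝ}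
    (hq : q ∈ α • mixture (topWeight (c (last m)) t₁) (intHull (lexBelow (init u) (init c)))
        (intHull (box (init u))) +
      β • mixture (botWeight (e (last m)) t₃) (intHull (lexAbove (init u) (init e)))
        (intHull (box (init u))) + (1 - α - β) • intHull (box (init u))) :
    (snoc q (α * t₁ + β * t₃ + (1 - α - β) * s) : Fin (m + 1) → ℝ) ∈
      α • intHull (lexBelow u c) + β • intHull (lexAbove u e) + (1 - α - β) • intHull (box u) := by
  obtain ⟨_, ⟨_, ⟨d, hd, rfl⟩, _, ⟨v, hv, rfl⟩, rfl⟩, _, ⟨f, hf, rfl⟩, rfl⟩ := hq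
  refine ⟨_, ⟨_, smul_mem_smul_set (snoc_mem_intHull_lexBelow hc ht₁ hd),
    _, smul_mem_smul_set (snoc_mem_intHull_lexAbove he ht₃ hv), rfl⟩,
    _, smul_mem_smul_set (snoc_mem_intHull_box hf hs), ?_⟩
  simp only [Fin.smul_snoc, Fin.snoc_add_snoc, smul_eq_mul]

theorem mixture_inter_mixture_subset {m : ℕ} {u c e : Fin m → ℤ} (hc : c ∈ box u)
    (he : e ∈ box u) {α β : ℝ} (hα : 0 ≤ α) (hβ : 0 ≤ β) (hαβ : α + β ≤ 1) :
    mixture α (intHull (lexBelow u c)) (intHull (box u)) ∩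
        mixture β (intHull (lexAbove u e)) (intHull (box u)) ⊆
      α • intHull (lexBelow u c) + β • intHull (lexAbove u e) + (1 - α - β) • intHull (box u) := by
  induction m generalizing α β with
  | zero =>
    intro p _
    have := add_mem_add (add_mem_add
      (smul_mem_smul_set (a := α) (toReal_mem_intHull (mem_lexBelow_self hc)))
      (smul_mem_smul_set (a := β) (toReal_mem_intHull (mem_lexAbove_self he))))
      (smul_mem_smul_set (a := 1 - α - β) (toReal_mem_intHull hc))
    exact Subsingleton.elim (α := Fin 0 → ℝ) _ p ▸ this
  | succ m ih =>
    rintro p ⟨hpD, hpU⟩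
    obtain ⟨t₁, ht₁, hle, hD⟩ := exists_init_mem_mixture_of_mem_lexBelow hc hα (by linarith) hpD
    obtain ⟨t₃, ht₃, hge, hU⟩ := exists_init_mem_mixture_of_mem_lexAbove he hβ (by linarith) hpU
    have hw₁ := topWeight_le_one ht₁.2
    have hw₃ := botWeight_le_one ht₃.1
    have hinit := ih (init_mem_box hc) (init_mem_box he) (mul_nonneg hα topWeight_nonneg)
      (mul_nonneg hβ botWeight_nonneg) (by nlinarith) ⟨hD, hU⟩
    -- heights `s₁ ≤ t₁` and `s₃ ≥ t₃` can only lower the two weights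
    obtain ⟨s₁, hs₁, s₃, hs₃, s, hs, hsum⟩ := exists_mul_add_mul_add_mul_eq ht₁.1
      ⟨(Int.cast_nonneg (he (last m)).1).trans ht₃.1, ht₃.2⟩ hge hle
    have hq := mem_smul_mixture_add_smul_mixture (intHull_mono (lexBelow_subset_box _ _))
      (intHull_mono (lexAbove_subset_box _ _)) (convex_intHull _)
      (mul_le_mul_of_nonneg_left (topWeight_mono hs₁.2) hα)
      (mul_le_mul_of_nonneg_left (botWeight_anti hs₃.1) hβ) (by nlinarith) hinit
    have := snoc_mem_smul_add_smul_add_smul hc he ⟨hs₁.1, hs₁.2.trans ht₁.2⟩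
      ⟨ht₃.1.trans hs₃.1, hs₃.2⟩ hs hq
    rwa [hsum, snoc_init_self] at this

end Slices

section Between

variable {m : ℕ} {u c e : Fin (m + 1) → ℤ}

theorem snoc_mem_lexBetween_of_lt_of_lt (hc : c ∈ box u) (he : e ∈ box u) {x : Fin m → ℤ}
    (hx : x ∈ box (init u)) {i : ℤ} (hei : e (last m) < i) (hic : i < c (last m)) :
    snoc x i ∈ lexBetween u e c :=
  ⟨snoc_mem_box_iff.2 ⟨hx, by linarith [(he (last m)).1], by linarith [(hc (last m)).2]⟩,
    le_toColex_snoc_iff.2 (Or.inl hei), toColex_snoc_le_iff.2 (Or.inl hic)⟩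

theorem snoc_top_mem_lexBetween (hc : c ∈ box u) (hec : e (last m) < c (last m))
    {x : Fin m → ℤ} (hx : x ∈ lexBelow (init u) (init c)) :
    snoc x (c (last m)) ∈ lexBetween u e c :=
  ⟨snoc_mem_box_iff.2 ⟨hx.1, hc (last m)⟩, le_toColex_snoc_iff.2 (Or.inl hec),
    toColex_snoc_le_iff.2 (Or.inr ⟨rfl, hx.2⟩)⟩

theorem snoc_bot_mem_lexBetween (he : e ∈ box u) (hec : e (last m) < c (last m))
    {x : Fin m → ℤ} (hx : x ∈ lexAbove (init u) (init e)) :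
    snoc x (e (last m)) ∈ lexBetween u e c :=
  ⟨snoc_mem_box_iff.2 ⟨hx.1, he (last m)⟩, le_toColex_snoc_iff.2 (Or.inr ⟨rfl, hx.2⟩),
    toColex_snoc_le_iff.2 (Or.inl hec)⟩

theorem snoc_mem_intHull_lexBetween (hc : c ∈ box u) (he : e ∈ box u)
    (hec : e (last m) < c (last m)) {t : ℝ} (ht : t ∈ Icc (e (last m) : ℝ) (c (last m)))
    {q : Fin m → ℝ}
    (hq : q ∈ topWeight (c (last m)) t • intHull (lexBelow (init u) (init c)) +
      botWeight (e (last m)) t • intHull (lexAbove (init u) (init e)) +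
      (1 - topWeight (c (last m)) t - botWeight (e (last m)) t) • intHull (box (init u))) :
    (snoc q t : Fin (m + 1) → ℝ) ∈ intHull (lexBetween u e c) := by
  have hD := intHull_nonempty ⟨_, mem_lexBelow_self (init_mem_box hc)⟩
  have hU := intHull_nonempty ⟨_, mem_lexAbove_self (init_mem_box he)⟩
  have hF := intHull_nonempty ⟨_, init_mem_box hc⟩
  rcases le_or_gt ((e (last m) : ℝ) + 1) t with hlt | hlt
  · rw [botWeight_of_le hlt, zero_smul_set hU, add_zero, sub_zero] at hq
    refine snoc_mem_intHull_of_topWeight (lo := e (last m) + 1) (fun x hx => ?_)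
      (fun x hx i hi hi' => ?_) (by push_cast; exact ⟨hlt, ht.2⟩) hq
    · exact snoc_top_mem_lexBetween hc hec hx
    · exact snoc_mem_lexBetween_of_lt_of_lt hc he hx (by omega) (by omega)
  rcases le_or_gt t ((c (last m) : ℝ) - 1) with hgt | hgt
  · rw [topWeight_of_le hgt, zero_smul_set hD, zero_add, sub_zero] at hq
    refine snoc_mem_intHull_of_botWeight (hi := c (last m) - 1) (fun x hx => ?_)
      (fun x hx i hi hi' => ?_) (by push_cast; exact ⟨ht.1, hgt⟩) hq
    · exact snoc_bot_mem_lexBetween he hec hx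
    · exact snoc_mem_lexBetween_of_lt_of_lt hc he hx (by omega) (by omega)
  have hce : c (last m) = e (last m) + 1 := by
    have : (c (last m) : ℝ) < e (last m) + 2 := by linarith
    have : c (last m) < e (last m) + 2 := by exact_mod_cast this
    omega
  have hsum : botWeight (e (last m)) t = 1 - topWeight (c (last m)) t := by
    rw [topWeight_of_lt hgt, botWeight_of_lt hlt, hce]; push_cast; ring
  rw [hsum, sub_self, zero_smul_set hF, add_zero] at hq
  refine snoc_mem_intHull_of_topWeight (lo := e (last m)) (A' := lexBelow (init u) (init c))
    (B' := lexAbove (init u) (init e)) (fun x hx => ?_) (fun x hx i hi hi' => ?_) ht hq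
  · exact snoc_top_mem_lexBetween hc hec hx
  · obtain rfl : i = e (last m) := by omega
    exact snoc_bot_mem_lexBetween he hec hx

end Between

theorem intHull_lexBelow_inter_intHull_lexAbove_subset {m : ℕ} {u c e : Fin m → ℤ}
    (hc : c ∈ box u) (he : e ∈ box u) (hec : toColex e ≤ toColex c) :
    intHull (lexBelow u c) ∩ intHull (lexAbove u e) ⊆ intHull (lexBetween u e c) := by
  induction m with
  | zero =>
    intro p _
    exact Subsingleton.elim (α := Fin 0 → ℝ) (toReal e) p ▸ toReal_mem_intHull ⟨he, le_rfl, hec⟩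
  | succ m ih =>
    rintro p ⟨hpD, hpU⟩
    obtain ⟨htD, hD⟩ := intHull_lexBelow_subset hc hpD
    obtain ⟨htU, hU⟩ := intHull_lexAbove_subset he hpU
    rw [← snoc_init_self p]
    rcases toColex_le_toColex_iff_last.1 hec with hlt | ⟨heq, hec'⟩
    · have ht : p (last m) ∈ Icc (e (last m) : ℝ) (c (last m)) := ⟨htU.1, htD.2⟩
      exact snoc_mem_intHull_lexBetween hc he hlt ht
        (mixture_inter_mixture_subset (init_mem_box hc) (init_mem_box he) topWeight_nonneg
          botWeight_nonneg (topWeight_add_botWeight_le hlt ht) ⟨hD, hU⟩)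
    · have hF := intHull_nonempty ⟨_, init_mem_box hc⟩
      have ht : p (last m) = c (last m) := le_antisymm htD.2 (heq ▸ htU.1)
      rw [ht, topWeight_self, mixture_one hF] at hD
      rw [ht, ← heq, botWeight_self, mixture_one hF] at hU
      rw [ht]
      refine snoc_mem_intHull (fun x hx => ?_)
        (ih (init_mem_box hc) (init_mem_box he) hec' ⟨hD, hU⟩) ⟨le_rfl, le_rfl⟩
      have hx' : snoc x (c (last m)) ∈ lexBetween u e c :=
        ⟨snoc_mem_box_iff.2 ⟨hx.1, hc (last m)⟩, le_toColex_snoc_iff.2 (Or.inr ⟨heq, hx.2.1⟩),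
          toColex_snoc_le_iff.2 (Or.inr ⟨rfl, hx.2.2⟩)⟩
      exact ⟨hx', hx'⟩

section Knapsack

variable {n : ℕ} {a u : Fin n → ℤ}

theorem sum_Iio_mul_le_of_superincreasing (ha : ∀ i, 0 < a i)
    (hsi : ∀ i j : Fin n, (j : ℕ) = (i : ℕ) + 1 → ∑ k ∈ Finset.Iic i, a k * u k ≤ a j)
    (j : Fin n) : ∑ k ∈ Finset.Iio j, a k * u k ≤ a j := by
  obtain ⟨_ | i, hj⟩ := j
  · rw [show Finset.Iio (⟨0, hj⟩ : Fin n) = ∅ by ext k; simp [Fin.lt_def]]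
    exact (ha _).le
  · have hIic : Finset.Iic (⟨i, by omega⟩ : Fin n) = Finset.Iio ⟨i + 1, hj⟩ := by
      ext k; simp only [Finset.mem_Iic, Finset.mem_Iio, Fin.lt_def, Fin.le_def]; omega
    exact hIic ▸ hsi _ _ rfl

theorem sum_mul_le_sum_mul_of_toColex_le (ha : ∀ i, 0 ≤ a i)
    (hsi : ∀ j, ∑ k ∈ Finset.Iio j, a k * u k ≤ a j) {x y : Fin n → ℤ} (hx : x ∈ box u)
    (hy : y ∈ box u) (hxy : toColex x ≤ toColex y) : ∑ i, a i * x i ≤ ∑ i, a i * y i := by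
  obtain ⟨j, hj, hlt⟩ | heq := hxy.lt_or_eq
  · have hlt : x j < y j := hlt
    have hsum : ∑ i, a i * y i - ∑ i, a i * x i = ∑ i ∈ Finset.Iic j, a i * (y i - x i) := by
      rw [← Finset.sum_sub_distrib, ← Finset.sum_subset (Finset.subset_univ (Finset.Iic j))]
      · exact Finset.sum_congr rfl fun i _ => (mul_sub _ _ _).symm
      · intro i _ hi
        have hxy : x i = y i := hj i (lt_of_not_ge (by simpa using hi))
        rw [hxy, sub_self]
    have hlow : -∑ i ∈ Finset.Iio j, a i * u i ≤ ∑ i ∈ Finset.Iio j, a i * (y i - x i) := by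
      rw [← Finset.sum_neg_distrib]
      exact Finset.sum_le_sum fun i _ => by nlinarith [ha i, hx i, hy i]
    have hj' : a j ≤ a j * (y j - x j) := le_mul_of_one_le_right (ha j) (by omega)
    rw [← Finset.Iio_insert, Finset.sum_insert Finset.notMem_Iio_self] at hsum
    linarith [hsi j]
  · rw [toColex_inj.1 heq]

theorem box_finite (u : Fin n → ℤ) : (box u).Finite :=
  (finite_Icc 0 u).subset fun _ hx => ⟨fun i => (hx i).1, fun i => (hx i).2⟩

theorem exists_setOf_sum_le_eq_lexBelow (ha : ∀ i, 0 ≤ a i)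
    (hsi : ∀ j, ∑ k ∈ Finset.Iio j, a k * u k ≤ a j) {b : ℤ}
    (hne : {x : Fin n → ℤ | (∀ i, 0 ≤ x i ∧ x i ≤ u i) ∧ ∑ i, a i * x i ≤ b}.Nonempty) :
    ∃ c ∈ box u, {x : Fin n → ℤ | (∀ i, 0 ≤ x i ∧ x i ≤ u i) ∧ ∑ i, a i * x i ≤ b} =
      lexBelow u c := by
  obtain ⟨c, hcK, hmax⟩ := exists_max_image _ toColex ((box_finite u).subset fun _ hx => hx.1) hne
  refine ⟨c, hcK.1, Set.ext fun x => ⟨fun hx => ⟨hx.1, hmax x hx⟩, fun hx => ⟨hx.1, ?_⟩⟩⟩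
  exact (sum_mul_le_sum_mul_of_toColex_le ha hsi hx.1 hcK.1 hx.2).trans hcK.2

theorem exists_setOf_le_sum_eq_lexAbove (ha : ∀ i, 0 ≤ a i)
    (hsi : ∀ j, ∑ k ∈ Finset.Iio j, a k * u k ≤ a j) {d : ℤ}
    (hne : {x : Fin n → ℤ | (∀ i, 0 ≤ x i ∧ x i ≤ u i) ∧ d ≤ ∑ i, a i * x i}.Nonempty) :
    ∃ e ∈ box u, {x : Fin n → ℤ | (∀ i, 0 ≤ x i ∧ x i ≤ u i) ∧ d ≤ ∑ i, a i * x i} =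
      lexAbove u e := by
  obtain ⟨e, heK, hmin⟩ := exists_min_image _ toColex ((box_finite u).subset fun _ hx => hx.1) hne
  refine ⟨e, heK.1, Set.ext fun x => ⟨fun hx => ⟨hx.1, hmin x hx⟩, fun hx => ⟨hx.1, ?_⟩⟩⟩
  exact heK.2.trans (sum_mul_le_sum_mul_of_toColex_le ha hsi heK.1 hx.1 hx.2)

end Knapsack

theorem stmt_13_general {n : ℕ}
    (a w u : Fin n → ℤ)
    (ha : ∀ i, 0 < a i) (hw : ∀ i, 0 < w i)
    (hsia : ∀ i j : Fin n, (j : ℕ) = (i : ℕ) + 1 →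
      ∑ k ∈ Finset.Iic i, a k * u k ≤ a j)
    (hsiw : ∀ i j : Fin n, (j : ℕ) = (i : ℕ) + 1 →
      ∑ k ∈ Finset.Iic i, w k * u k ≤ w j)
    (b d : ℤ)
    (hne : ∃ x : Fin n → ℤ, (∀ i, 0 ≤ x i ∧ x i ≤ u i) ∧
      ∑ i, a i * x i ≤ b ∧ d ≤ ∑ i, w i * x i) :
    convexHull ℝ (toReal ''
        {x : Fin n → ℤ | (∀ i, 0 ≤ x i ∧ x i ≤ u i) ∧
          ∑ i, a i * x i ≤ b ∧ d ≤ ∑ i, w i * x i}) =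
      convexHull ℝ (toReal ''
          {x : Fin n → ℤ | (∀ i, 0 ≤ x i ∧ x i ≤ u i) ∧ ∑ i, a i * x i ≤ b}) ∩
        convexHull ℝ (toReal ''
          {x : Fin n → ℤ | (∀ i, 0 ≤ x i ∧ x i ≤ u i) ∧ d ≤ ∑ i, w i * x i}) := by
  obtain ⟨z, hz, hza, hzw⟩ := hne
  obtain ⟨c, hc, hKc⟩ := exists_setOf_sum_le_eq_lexBelow (fun i => (ha i).le)
    (sum_Iio_mul_le_of_superincreasing ha hsia) ⟨z, hz, hza⟩
  obtain ⟨e, he, hKe⟩ := exists_setOf_le_sum_eq_lexAbove (fun i => (hw i).le)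
    (sum_Iio_mul_le_of_superincreasing hw hsiw) ⟨z, hz, hzw⟩
  have hK : {x : Fin n → ℤ | (∀ i, 0 ≤ x i ∧ x i ≤ u i) ∧
      ∑ i, a i * x i ≤ b ∧ d ≤ ∑ i, w i * x i} = lexBetween u e c := by
    rw [← lexBelow_inter_lexAbove, ← hKc, ← hKe]
    ext x
    simp only [mem_inter_iff, mem_ofPred_eq]
    tauto
  have hzK : z ∈ lexBetween u e c := hK ▸ ⟨hz, hza, hzw⟩
  rw [hK, hKc, hKe]
  exact (subset_inter (intHull_mono lexBetween_subset_lexBelow)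
    (intHull_mono lexBetween_subset_lexAbove)).antisymm
    (intHull_lexBelow_inter_intHull_lexAbove_subset hc he (hzK.2.1.trans hzK.2.2))

/-- for a `≤`-type and a `≥`-type superincreasing knapsack with nonempty
intersection, the convex hull operator distributes over the intersection. -/
theorem stmt_13 {n : ℕ} (hn : 1 ≤ n)
    (a w u : Fin n → ℤ)
    (ha : ∀ i, 0 < a i) (hw : ∀ i, 0 < w i) (hu : ∀ i, 1 ≤ u i)
    (hsia : ∀ i j : Fin n, (j : ℕ) = (i : ℕ) + 1 →
      ∑ k ∈ Finset.Iic i, a k * u k ≤ a j)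
    (hsiw : ∀ i j : Fin n, (j : ℕ) = (i : ℕ) + 1 →
      ∑ k ∈ Finset.Iic i, w k * u k ≤ w j)
    (b d : ℤ) (hb : 0 < b) (hd : 0 < d)
    (hne : ∃ x : Fin n → ℤ, (∀ i, 0 ≤ x i ∧ x i ≤ u i) ∧
      ∑ i, a i * x i ≤ b ∧ d ≤ ∑ i, w i * x i) :
    convexHull ℝ (toReal ''
        {x : Fin n → ℤ | (∀ i, 0 ≤ x i ∧ x i ≤ u i) ∧
          ∑ i, a i * x i ≤ b ∧ d ≤ ∑ i, w i * x i}) =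
      convexHull ℝ (toReal ''
          {x : Fin n → ℤ | (∀ i, 0 ≤ x i ∧ x i ≤ u i) ∧ ∑ i, a i * x i ≤ b}) ∩
        convexHull ℝ (toReal ''
          {x : Fin n → ℤ | (∀ i, 0 ≤ x i ∧ x i ≤ u i) ∧ d ≤ ∑ i, w i * x i}) :=
  stmt_13_general a w u ha hw hsia hsiw b d hne
end

section
/- Let n ≥ 1, let w_1,…,w_n, u_1,…,u_n be positive integers such that {(w_i,u_i)}_{i=1}^n is superincreasing, and let d be a positive integer with d ≤ ∑_{i=1}^n w_i u_i. Define the minimal packing γ ∈ ℤⁿ by the backward recursion γ_i = u_i − min(u_i, ⌊(∑_{k=1}^n w_k u_k − d − ∑_{k=i+1}^n w_k (u_k − γ_k))/w_i⌋) for i = n, …, 1. Then {x ∈ rect(u) : ∑_{i=1}^n w_i x_i ≥ d} = {x ∈ rect(u) : γ ⪯ x}. -/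
/-! Writing `y = u - x` turns the covering condition `d ≤ ∑ w x` into the packing condition
`∑ w y ≤ ∑ w u - d`, and `γ` into `β = u - γ`, the greedy packing that takes as many copies of
the heaviest items as still fit. Let `y` in the box agree with `β` above its top differing index
`s`. If `y s < β s`, superincreasingness bounds the weight of everything below `s` by `w s`, so
`y` fits because `β` does. If `y s > β s`, then `β s < u s`, so the greedy step stopped because
one more copy of item `s` overflows, and `y` overflows too. -/

/-- `y` is lexicographically smaller than or equal to `x`: either `y = x`, or at the
largest index `s` where they differ, `y s < x s`. -/
def lexLe {n : ℕ} (y x : Fin n → ℤ) : Prop :=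
  y = x ∨ ∃ s : Fin n, y s < x s ∧ ∀ k : Fin n, s < k → y k = x k

open Finset

theorem lexLe_refl {n : ℕ} (x : Fin n → ℤ) : lexLe x x := Or.inl rfl

theorem lexLe_total {n : ℕ} (x y : Fin n → ℤ) : lexLe x y ∨ lexLe y x := by
  classical
  by_cases hxy : x = y
  · exact Or.inl (Or.inl hxy)
  obtain ⟨s, hs, htop⟩ : ∃ s, x s ≠ y s ∧ ∀ k, s < k → x k = y k := by
    obtain ⟨s, hs, hmax⟩ := exists_max_image (univ.filter fun k => x k ≠ y k) id
      (by simpa [filter_nonempty_iff] using Function.ne_iff.1 hxy)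
    refine ⟨s, by simpa using hs, fun k hk => ?_⟩
    by_contra h
    exact (hmax k (by simpa using h)).not_gt hk
  rcases hs.lt_or_gt with h | h
  · exact Or.inl (Or.inr ⟨s, h, htop⟩)
  · exact Or.inr (Or.inr ⟨s, h, fun k hk => (htop k hk).symm⟩)

theorem lexLe_sub_iff {n : ℕ} (u x y : Fin n → ℤ) : lexLe (u - x) (u - y) ↔ lexLe y x := by
  simp only [lexLe, sub_right_inj, Pi.sub_apply, sub_lt_sub_iff_left, eq_comm]

theorem sum_eq_sum_Iio_add_add_sum_Ioi {α M : Type*} [Fintype α] [LinearOrder α]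
    [LocallyFiniteOrderBot α] [LocallyFiniteOrderTop α] [AddCommMonoid M] (f : α → M) (s : α) :
    ∑ k, f k = ∑ k ∈ Iio s, f k + f s + ∑ k ∈ Ioi s, f k := by
  classical
  rw [add_assoc, add_sum_Ioi_eq_sum_Ici, ← sum_filter_add_sum_filter_not univ (· < s)]
  congr 2 <;> ext k <;> simp

theorem sum_mul_eq_of_eq_on_Ioi {n : ℕ} {w y z : Fin n → ℤ} {s : Fin n}
    (htop : ∀ k, s < k → y k = z k) :
    ∑ i, w i * y i = ∑ k ∈ Iio s, w k * y k + w s * y s + ∑ k ∈ Ioi s, w k * z k := by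
  rw [sum_eq_sum_Iio_add_add_sum_Ioi _ s]
  congr 1
  exact sum_congr rfl fun k hk => by rw [htop k (mem_Ioi.1 hk)]

def Superincreasing {n : ℕ} (w u : Fin n → ℤ) : Prop :=
  ∀ s, ∑ k ∈ Iio s, w k * u k ≤ w s

theorem superincreasing_of_succ {n : ℕ} {w u : Fin n → ℤ} (hw : ∀ i, 0 ≤ w i)
    (hsucc : ∀ i j : Fin n, (j : ℕ) = i + 1 → ∑ k ∈ Iic i, w k * u k ≤ w j) :
    Superincreasing w u := by
  intro s
  by_cases hs : (s : ℕ) = 0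
  · have hIio : Iio s = ∅ := by ext k; simp [Fin.lt_def, hs]
    rw [hIio, sum_empty]
    exact hw s
  · let i : Fin n := ⟨s - 1, by omega⟩
    have hIio : Iio s = Iic i := by
      ext k
      simp only [mem_Iio, mem_Iic, Fin.lt_def, Fin.le_def, i]
      omega
    rw [hIio]
    exact hsucc i s (by simp [i]; omega)

def IsGreedyFill {n : ℕ} (w u : Fin n → ℤ) (c : ℤ) (β : Fin n → ℤ) : Prop :=
  ∀ i, β i = min (u i) ((c - ∑ k ∈ Ioi i, w k * β k).fdiv (w i))

namespace IsGreedyFill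

variable {n : ℕ} {w u β y : Fin n → ℤ} {c : ℤ}

theorem mul_le (hβ : IsGreedyFill w u c β) {i : Fin n} (hw : 0 < w i) :
    w i * β i ≤ c - ∑ k ∈ Ioi i, w k * β k := by
  have h : β i ≤ (c - ∑ k ∈ Ioi i, w k * β k) / w i := by
    rw [← Int.fdiv_eq_ediv_of_nonneg _ hw.le, hβ i]
    exact min_le_right _ _
  rw [mul_comm]
  exact (Int.le_ediv_iff_mul_le hw).1 h

theorem lt_mul_add_one (hβ : IsGreedyFill w u c β) {i : Fin n} (hw : 0 < w i)
    (hlt : β i < u i) : c - ∑ k ∈ Ioi i, w k * β k < w i * (β i + 1) := by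
  have h : β i = (c - ∑ k ∈ Ioi i, w k * β k) / w i := by
    rw [← Int.fdiv_eq_ediv_of_nonneg _ hw.le]
    rcases min_choice (u i) ((c - ∑ k ∈ Ioi i, w k * β k).fdiv (w i)) with h | h
    · rw [hβ i, h] at hlt; exact absurd hlt (lt_irrefl _)
    · rw [← h, ← hβ i]
  rw [h, mul_comm]
  exact Int.lt_ediv_add_one_mul_self _ hw

theorem sum_le (hβ : IsGreedyFill w u c β) (hw : ∀ i, 0 < w i) (hn : 1 ≤ n) :
    ∑ i, w i * β i ≤ c := by
  have huniv : (univ : Finset (Fin n)) = Ici ⟨0, hn⟩ := by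
    ext k; simp [Fin.le_def]
  have := hβ.mul_le (hw ⟨0, hn⟩)
  rw [huniv, ← add_sum_Ioi_eq_sum_Ici]
  linarith

theorem sum_le_of_lt (hβ : IsGreedyFill w u c β) (hw : ∀ i, 0 < w i)
    (hsup : Superincreasing w u) (hyu : ∀ i, y i ≤ u i) {s : Fin n} (hlt : y s < β s)
    (htop : ∀ k, s < k → y k = β k) : ∑ i, w i * y i ≤ c := by
  have hlow : ∑ k ∈ Iio s, w k * y k ≤ w s :=
    (sum_le_sum fun k _ => mul_le_mul_of_nonneg_left (hyu k) (hw k).le).trans (hsup s)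
  have hs : w s * y s ≤ w s * (β s - 1) :=
    mul_le_mul_of_nonneg_left (by omega) (hw s).le
  have hgreedy := hβ.mul_le (hw s)
  rw [sum_mul_eq_of_eq_on_Ioi htop]
  linarith

theorem lt_sum_of_gt (hβ : IsGreedyFill w u c β) (hw : ∀ i, 0 < w i)
    (hy0 : ∀ i, 0 ≤ y i) {s : Fin n} (hyu : y s ≤ u s) (hgt : β s < y s)
    (htop : ∀ k, s < k → y k = β k) : c < ∑ i, w i * y i := by
  have hlow : 0 ≤ ∑ k ∈ Iio s, w k * y k :=
    sum_nonneg fun k _ => mul_nonneg (hw k).le (hy0 k)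
  have hs : w s * (β s + 1) ≤ w s * y s :=
    mul_le_mul_of_nonneg_left (by omega) (hw s).le
  have hgreedy := hβ.lt_mul_add_one (hw s) (hgt.trans_le hyu)
  rw [sum_mul_eq_of_eq_on_Ioi htop]
  linarith

theorem sum_le_iff_lexLe (hβ : IsGreedyFill w u c β) (hw : ∀ i, 0 < w i)
    (hsup : Superincreasing w u) (hn : 1 ≤ n) (hy : ∀ i, 0 ≤ y i ∧ y i ≤ u i) :
    ∑ i, w i * y i ≤ c ↔ lexLe y β := by
  constructor
  · intro hle
    rcases lexLe_total y β with h | rfl | ⟨s, hgt, htop⟩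
    · exact h
    · exact lexLe_refl _
    · exact absurd hle (hβ.lt_sum_of_gt hw (fun i => (hy i).1) (hy s).2 hgt
        fun k hk => (htop k hk).symm).not_ge
  · rintro (rfl | ⟨s, hlt, htop⟩)
    · exact hβ.sum_le hw hn
    · exact hβ.sum_le_of_lt hw hsup (fun i => (hy i).2) hlt htop

end IsGreedyFill

theorem stmt_14_general {n : ℕ} (hn : 1 ≤ n)
    (w u : Fin n → ℤ) (hw : ∀ i, 0 < w i)
    (hsi : ∀ i j : Fin n, (j : ℕ) = (i : ℕ) + 1 →
      ∑ k ∈ Finset.Iic i, w k * u k ≤ w j)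
    (d : ℤ)
    (γ : Fin n → ℤ)
    (hγ : ∀ i : Fin n, γ i = u i - min (u i)
      (((∑ k, w k * u k) - d - ∑ k ∈ Finset.Ioi i, w k * (u k - γ k)).fdiv (w i))) :
    {x : Fin n → ℤ | (∀ i, 0 ≤ x i ∧ x i ≤ u i) ∧ d ≤ ∑ i, w i * x i} =
      {x : Fin n → ℤ | (∀ i, 0 ≤ x i ∧ x i ≤ u i) ∧ lexLe γ x} := by
  have hβ : IsGreedyFill w u (∑ i, w i * u i - d) (u - γ) := fun i => by
    simp only [Pi.sub_apply]
    rw [hγ i, sub_sub_cancel]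
  have hsup : Superincreasing w u := superincreasing_of_succ (fun i => (hw i).le) hsi
  ext x
  have hbox : (∀ i, 0 ≤ x i ∧ x i ≤ u i) ↔ ∀ i, 0 ≤ (u - x) i ∧ (u - x) i ≤ u i :=
    forall_congr' fun i => by simp only [Pi.sub_apply]; omega
  have hcover : d ≤ ∑ i, w i * x i ↔ ∑ i, w i * (u - x) i ≤ ∑ i, w i * u i - d := by
    simp only [Pi.sub_apply, mul_sub, sum_sub_distrib]
    omega
  simp only [Set.mem_ofPred_eq, ← lexLe_sub_iff u x γ, hbox]
  exact and_congr_right fun hy => hcover.trans (hβ.sum_le_iff_lexLe hw hsup hn hy)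

/-- the `≥`-type superincreasing knapsack equals the set of points of
`rect u` that are lexicographically greater than or equal to its minimal packing `γ`. -/
theorem stmt_14 {n : ℕ} (hn : 1 ≤ n)
    (w u : Fin n → ℤ) (hw : ∀ i, 0 < w i) (hu : ∀ i, 1 ≤ u i)
    (hsi : ∀ i j : Fin n, (j : ℕ) = (i : ℕ) + 1 →
      ∑ k ∈ Finset.Iic i, w k * u k ≤ w j)
    (d : ℤ) (hd : 0 < d) (hdle : d ≤ ∑ i, w i * u i)
    (γ : Fin n → ℤ)
    (hγ : ∀ i : Fin n, γ i = u i - min (u i)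
      (((∑ k, w k * u k) - d - ∑ k ∈ Finset.Ioi i, w k * (u k - γ k)).fdiv (w i))) :
    {x : Fin n → ℤ | (∀ i, 0 ≤ x i ∧ x i ≤ u i) ∧ d ≤ ∑ i, w i * x i} =
      {x : Fin n → ℤ | (∀ i, 0 ≤ x i ∧ x i ≤ u i) ∧ lexLe γ x} :=
  stmt_14_general hn w u hw hsi d γ hγ
end

section
/- Assume {(a_i,u_i)}_{i=1}^n is superincreasing and a_i u_i ≤ b for all i. Then for every j ∈ {1,…,n−1} and all s, i ∈ I_j with s < i, one has the identity φ_j(i) = φ_j(s) · (1 + ∑_{k ∈ I_j, s ≤ k < i} φ_k(i)). -/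
/-!
Splitting `Ioo j i` at `s` factors the product defining `φ_j(i)` as `φ_j(s)` times the product of
`1 + (u_k - θ_k)` over the indices `k ∈ I ∩ [s, i)`, and expanding that product from the largest
index down, `∏ (1 + c_k) = 1 + ∑_k c_k ∏_{l > k} (1 + c_l)`, turns it into `1 + ∑_k φ_k(i)`.
-/

open Finset

theorem Finset.prod_one_add_ordered_desc {ι R : Type*} [LinearOrder ι] [CommSemiring R]
    (s : Finset ι) (f : ι → R) :
    ∏ i ∈ s, (1 + f i) = 1 + ∑ i ∈ s, f i * ∏ j ∈ s with i < j, (1 + f j) :=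
  prod_one_add_ordered (ι := ιᵒᵈ) s f

theorem Finset.Ioo_union_Ico_eq_Ioo {α : Type*} [LinearOrder α] [LocallyFiniteOrder α]
    {a b c : α} (hab : a < b) (hbc : b ≤ c) : Ioo a b ∪ Ico b c = Ioo a c := by
  rw [← coe_inj, coe_union, coe_Ioo, coe_Ico, coe_Ioo, Set.Ioo_union_Ico_eq_Ioo hab hbc]

section ChainWeight

variable {ι R : Type*} [LinearOrder ι] [LocallyFiniteOrder ι] [CommSemiring R]
  (c : ι → R) (p : ι → Prop) [DecidablePred p]

/-- The paper's `φ_j(i)` is `chainWeight (u - θ) (1 ≤ θ ·) j i`. -/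
def chainWeight (j i : ι) : R :=
  c j * ∏ k ∈ Ioo j i with p k, (1 + c k)

theorem prod_filter_Ico_one_add_eq {s i : ι} :
    ∏ k ∈ Ico s i with p k, (1 + c k) = 1 + ∑ k ∈ Ico s i with p k, chainWeight c p k i := by
  rw [prod_one_add_ordered_desc]
  congr 1
  refine sum_congr rfl fun k hk => ?_
  rw [chainWeight, filter_filter]
  congr 2
  ext l
  simp only [mem_filter, mem_Ico, mem_Ioo] at hk ⊢
  grind

theorem chainWeight_eq_mul {j s i : ι} (hjs : j < s) (hsi : s ≤ i) :
    chainWeight c p j i =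
      chainWeight c p j s * (1 + ∑ k ∈ Ico s i with p k, chainWeight c p k i) := by
  have hdisj : Disjoint (Ioo j s) (Ico s i) :=
    disjoint_left.2 fun k hk hk' => (mem_Ioo.1 hk).2.not_ge (mem_Ico.1 hk').1
  rw [chainWeight, chainWeight, ← Ioo_union_Ico_eq_Ioo hjs hsi, filter_union,
    prod_union (disjoint_filter_filter hdisj), prod_filter_Ico_one_add_eq, mul_assoc]

end ChainWeight

/-- Indices are `Fin n` (0-based), so "`j ∈ {1,…,n−1}`" reads `(j : ℕ) + 1 < n`. -/
theorem stmt_17_general {n : ℕ}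
    (u : Fin n → ℤ)
    (θ : Fin n → ℤ)
    (φ : Fin n → Fin n → ℤ)
    (hφ : ∀ j i : Fin n, φ j i =
      (u j - θ j) * ∏ k ∈ (Finset.Ioo j i).filter (fun k => 1 ≤ θ k), (u k + 1 - θ k)) :
    ∀ j s i : Fin n, (j : ℕ) + 1 < n →
      j < s → 1 ≤ θ s → j < i → 1 ≤ θ i → s < i →
      φ j i = φ j s *
        (1 + ∑ k ∈ (Finset.Ico s i).filter (fun k => 1 ≤ θ k), φ k i) := by
  intro j s i _ hjs _ _ _ hsi
  have hφ_eq : φ = chainWeight (fun k => u k - θ k) (fun k => 1 ≤ θ k) := by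
    ext j i
    rw [hφ, chainWeight]
    exact congrArg _ (prod_congr rfl fun k _ => by ring)
  rw [hφ_eq]
  exact chainWeight_eq_mul _ _ hjs hsi.le

/-- the multiplicative identity
`φ_j(i) = φ_j(s) · (1 + ∑_{k ∈ I_j, s ≤ k < i} φ_k(i))` for `s, i ∈ I_j` with `s < i`.
Indices are `Fin n` (0-based), so "`j ∈ {1,…,n−1}`" reads `(j : ℕ) + 1 < n`. -/
theorem stmt_17 {n : ℕ} (hn : 1 ≤ n)
    (a u : Fin n → ℤ) (ha : ∀ i, 0 < a i) (hu : ∀ i, 1 ≤ u i)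
    (b : ℤ) (hb : 0 < b)
    (hub : ∀ i, a i * u i ≤ b)
    (hsi : ∀ i j : Fin n, (j : ℕ) = (i : ℕ) + 1 →
      ∑ k ∈ Finset.Iic i, a k * u k ≤ a j)
    (θ : Fin n → ℤ)
    (hθ : ∀ i : Fin n,
      θ i = min (u i) ((b - ∑ k ∈ Finset.Ioi i, a k * θ k).fdiv (a i)))
    (φ : Fin n → Fin n → ℤ)
    (hφ : ∀ j i : Fin n, φ j i =
      (u j - θ j) * ∏ k ∈ (Finset.Ioo j i).filter (fun k => 1 ≤ θ k), (u k + 1 - θ k)) :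
    ∀ j s i : Fin n, (j : ℕ) + 1 < n →
      j < s → 1 ≤ θ s → j < i → 1 ≤ θ i → s < i →
      φ j i = φ j s *
        (1 + ∑ k ∈ (Finset.Ico s i).filter (fun k => 1 ≤ θ k), φ k i) :=
  stmt_17_general u θ φ hφ
end

section
/- In the two-knapsack setting, assume additionally that ∑_{i=1}^{n−1} w_i u_i + (θ_n − 1)·w_n ≥ d and γ_n = θ_n − 1. Let m = max{i ∈ I : i < n} if I contains an index smaller than n, and m = 0 otherwise, where I = {i : θ_i ≥ 1}. Let ε ∈ (0,1) and let x ∈ ℝⁿ with 0 ≤ x_i ≤ u_i for all i and x_n = θ_n − ε. Define δ ∈ ℝⁿ by δ_i = min(ε·u_i, x_i) for i ≤ m and δ_i = x_i for m < i ≤ n. Then for every j ∈ {1,…,n−1}: (1) if x ∈ conv(K^≤), then x_j − δ_j − θ_j(1−ε) + ∑_{i ∈ I_j, i < n} φ_j(i)·(x_i − δ_i − θ_i(1−ε)) ≤ 0; (2) if x ∈ conv(K^≥), then δ_j + ∑_{i ∈ T_j, i < n} Φ_j(i)·δ_i ≥ ε·Φ_j(n). -/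
/-!
The greedy solution `θ` is lexicographically maximal in `K^≤`: an integer point of `K^≤` that
agrees with `θ` above `t` has `z_t ≤ θ_t`, since otherwise it would exceed the residual capacity
that the greedy step filled at `t`. The complement `z ↦ u - z` turns `K^≥` into a knapsack with
capacity `∑ w u - d` whose greedy solution is `u - γ`, so `γ` is lexicographically minimal in
`K^≥`.

For an integer point `z` of `K^≤` with `z_n = θ_n`, compare `z` and `θ` at the last index `t`
where they differ: the weights `φ_j` telescope, `u_j - θ_j + ∑_{i < t} φ_j(i) (u_i - θ_i) = φ_j(t)`,
so the gain of at most `u - θ` before `t` is paid for by the loss `≥ 1` at `t`. This gives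
`z_j + ∑ φ_j(i) z_i ≤ θ_j + ∑ φ_j(i) θ_i`, and on complements `Φ_j(n) ≤ z_j + ∑ Φ_j(i) z_i` for
the points of `K^≥` with `z_n = γ_n`.

Finally `x = (1 - μ) y + μ y'` with `y` in the hull of the points on the slice `z_n = θ_n`
(resp. `z_n = γ_n`) and `y'` in the hull of the others. Integrality of the last coordinate
forces `μ ≤ ε` (resp. `1 - μ ≥ ε`), and comparing `x - δ` (resp. `δ`) with `y` coordinatewise
turns the slice inequalities for `y` into (1) and (2).
-/

open Finset

section Greedy

variable {ι : Type*} [LinearOrder ι] [LocallyFiniteOrderTop ι]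

def IsGreedy (a u : ι → ℤ) (b : ℤ) (θ : ι → ℤ) : Prop :=
  ∀ i, θ i = min (u i) ((b - ∑ k ∈ Ioi i, a k * θ k).fdiv (a i))

def IsMinPacking [Fintype ι] (w u : ι → ℤ) (d : ℤ) (γ : ι → ℤ) : Prop :=
  ∀ i, γ i = u i - min (u i) (((∑ k, w k * u k) - d - ∑ k ∈ Ioi i, w k * (u k - γ k)).fdiv (w i))

variable {a u θ : ι → ℤ} {b : ℤ}

namespace IsGreedy

lemma mul_le_residual (hθ : IsGreedy a u b θ) (ha : ∀ i, 0 < a i) (i : ι) :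
    a i * θ i ≤ b - ∑ k ∈ Ioi i, a k * θ k := by
  have h : θ i ≤ (b - ∑ k ∈ Ioi i, a k * θ k) / a i := by
    rw [hθ i, Int.fdiv_eq_ediv_of_nonneg _ (ha i).le]
    exact min_le_right _ _
  calc a i * θ i ≤ a i * ((b - ∑ k ∈ Ioi i, a k * θ k) / a i) :=
        mul_le_mul_of_nonneg_left h (ha i).le
    _ ≤ b - ∑ k ∈ Ioi i, a k * θ k := Int.mul_ediv_self_le (ha i).ne'

lemma nonneg (hθ : IsGreedy a u b θ) (ha : ∀ i, 0 < a i) (hb : 0 ≤ b) (hu : ∀ i, 0 ≤ u i)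
    (i : ι) : 0 ≤ θ i := by
  have hsum : ∑ k ∈ Ioi i, a k * θ k ≤ b := by
    rcases (Ioi i).eq_empty_or_nonempty with h | h
    · simpa [h] using hb
    · have hIoi : Ioi i = Ici ((Ioi i).min' h) := by
        ext k
        simp only [mem_Ioi, mem_Ici]
        exact ⟨fun hk => min'_le _ k (mem_Ioi.2 hk), (mem_Ioi.1 (min'_mem _ h)).trans_le⟩
      rw [hIoi, ← Ioi_insert, sum_insert (by simp)]
      linarith [hθ.mul_le_residual ha ((Ioi i).min' h)]
  rw [hθ i, Int.fdiv_eq_ediv_of_nonneg _ (ha i).le]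
  exact le_min (hu i) (Int.ediv_nonneg (by linarith) (ha i).le)

lemma le_of_forall_gt_eq [Fintype ι] (hθ : IsGreedy a u b θ) (ha : ∀ i, 0 < a i)
    {z : ι → ℤ} (hz0 : ∀ i, 0 ≤ z i) (hzu : ∀ i, z i ≤ u i) (hz : ∑ i, a i * z i ≤ b)
    {t : ι} (ht : ∀ k, t < k → z k = θ k) : z t ≤ θ t := by
  by_contra! hlt
  have hq : θ t = (b - ∑ k ∈ Ioi t, a k * θ k) / a t := by
    have h := hθ t
    rw [Int.fdiv_eq_ediv_of_nonneg _ (ha t).le] at h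
    rcases min_choice (u t) ((b - ∑ k ∈ Ioi t, a k * θ k) / a t) with e | e
    · exact absurd (h.trans e) (hlt.trans_le (hzu t)).ne
    · exact h.trans e
  have hres : b - ∑ k ∈ Ioi t, a k * θ k < a t * (θ t + 1) := by
    rw [hq, mul_comm]
    exact Int.lt_ediv_add_one_mul_self _ (ha t)
  have hsub : a t * z t + ∑ k ∈ Ioi t, a k * z k ≤ ∑ i, a i * z i := by
    rw [← sum_insert (f := fun k => a k * z k) (by simp)]
    exact sum_le_sum_of_subset_of_nonneg (subset_univ _)
      fun i _ _ => mul_nonneg (ha i).le (hz0 i)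
  have htail : ∑ k ∈ Ioi t, a k * z k = ∑ k ∈ Ioi t, a k * θ k :=
    sum_congr rfl fun k hk => by rw [ht k (mem_Ioi.1 hk)]
  have hzt : a t * (θ t + 1) ≤ a t * z t := mul_le_mul_of_nonneg_left hlt (ha t).le
  linarith

end IsGreedy

namespace IsMinPacking

variable [Fintype ι] {w γ : ι → ℤ} {d : ℤ}

lemma isGreedy_sub (hγ : IsMinPacking w u d γ) :
    IsGreedy w u ((∑ k, w k * u k) - d) (u - γ) := fun i => by
  simp only [Pi.sub_apply]
  rw [hγ i, sub_sub_cancel]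

lemma le_of_forall_gt_eq (hγ : IsMinPacking w u d γ) (hw : ∀ i, 0 < w i)
    {z : ι → ℤ} (hz0 : ∀ i, 0 ≤ z i) (hzu : ∀ i, z i ≤ u i) (hz : d ≤ ∑ i, w i * z i)
    {t : ι} (ht : ∀ k, t < k → z k = γ k) : γ t ≤ z t := by
  have := hγ.isGreedy_sub.le_of_forall_gt_eq hw (z := u - z) (fun i => sub_nonneg.2 (hzu i))
    (fun i => by simp [hz0 i])
    (by simp only [Pi.sub_apply, mul_sub, sum_sub_distrib]; linarith) (t := t)
    (fun k hk => by simp [ht k hk])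
  simp only [Pi.sub_apply] at this
  linarith

end IsMinPacking

end Greedy

section LexWeight

variable {ι : Type*} [LinearOrder ι]

lemma forall_gt_eq_or_exists_max_ne [Finite ι] {β : Type*} (f g : ι → β) (j : ι) :
    (∀ k, j < k → f k = g k) ∨ ∃ t, j < t ∧ f t ≠ g t ∧ ∀ k, t < k → f k = g k := by
  by_cases h : ∀ k, j < k → f k = g k
  · exact Or.inl h
  · push Not at h
    obtain ⟨t, ⟨hjt, hne⟩, hmax⟩ := (Set.toFinite {k | j < k ∧ f k ≠ g k}).exists_maximal h
    refine Or.inr ⟨t, hjt, hne, fun k hk => ?_⟩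
    by_contra hk'
    exact hk.not_ge (hmax ⟨hjt.trans hk, hk'⟩ hk.le)

variable [LocallyFiniteOrder ι]

def lexWeight (u θ : ι → ℤ) (j i : ι) : ℤ :=
  (u j - θ j) * ∏ k ∈ (Ioo j i).filter (fun k => 1 ≤ θ k), (u k + 1 - θ k)

def packWeight (u γ : ι → ℤ) (j i : ι) : ℤ :=
  γ j * ∏ k ∈ (Ioo j i).filter (fun k => γ k + 1 ≤ u k), (γ k + 1)

lemma packWeight_eq_lexWeight (u γ : ι → ℤ) : packWeight u γ = lexWeight u (u - γ) := by
  funext j i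
  simp only [packWeight, lexWeight, Pi.sub_apply, sub_sub_cancel]
  exact congrArg _ (prod_congr (filter_congr fun k _ => by omega) fun k _ => by ring)

lemma lexWeight_nonneg {u θ : ι → ℤ} (hθu : ∀ k, θ k ≤ u k) (j i : ι) :
    0 ≤ lexWeight u θ j i :=
  mul_nonneg (sub_nonneg.2 (hθu j)) (prod_nonneg fun k _ => by linarith [hθu k])

lemma packWeight_nonneg {u γ : ι → ℤ} (hγ0 : ∀ k, 0 ≤ γ k) (j i : ι) :
    0 ≤ packWeight u γ j i :=
  mul_nonneg (hγ0 j) (prod_nonneg fun k _ => by linarith [hγ0 k])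

lemma filter_Ioo_filter_lt {P : ι → Prop} [DecidablePred P] {j t i : ι} (hit : i < t) :
    ((Ioo j t).filter P).filter (· < i) = (Ioo j i).filter P := by
  rw [filter_comm, Ioo_filter_lt, min_eq_right hit.le]

lemma sum_filter_Ioo_eq_add_of_eq_zero {M : Type*} [AddCommMonoid M] {P : ι → Prop}
    [DecidablePred P] {f : ι → M} {j t l : ι} (hjt : j < t) (htl : t < l) (hPt : P t)
    (hf : ∀ i, t < i → f i = 0) :
    ∑ i ∈ (Ioo j l).filter P, f i = f t + ∑ i ∈ (Ioo j t).filter P, f i := by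
  have hIoc : (Ioc j t).filter P = insert t ((Ioo j t).filter P) := by
    rw [← Ioo_insert_right hjt, filter_insert, if_pos hPt]
  calc ∑ i ∈ (Ioo j l).filter P, f i = ∑ i ∈ (Ioc j t).filter P, f i := by
        refine (sum_subset (fun i hi => ?_) fun i hi hi' => hf i ?_).symm
        · simp only [mem_filter, mem_Ioc, mem_Ioo] at hi ⊢
          exact ⟨⟨hi.1.1, hi.1.2.trans_lt htl⟩, hi.2⟩
        · simp only [mem_filter, mem_Ioc, mem_Ioo] at hi hi'
          exact lt_of_not_ge fun hit => hi' ⟨⟨hi.1.1, hit⟩, hi.2⟩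
    _ = f t + ∑ i ∈ (Ioo j t).filter P, f i := by rw [hIoc, sum_insert (by simp)]

lemma lexWeight_eq_add_sum (u θ : ι → ℤ) (j t : ι) :
    lexWeight u θ j t = (u j - θ j) +
      ∑ i ∈ (Ioo j t).filter (fun k => 1 ≤ θ k), lexWeight u θ j i * (u i - θ i) := by
  have hslack : ∀ k, u k + 1 - θ k = 1 + (u k - θ k) := fun k => by ring
  simp only [lexWeight, hslack]
  rw [prod_one_add_ordered, mul_add, mul_one, mul_sum]
  refine congrArg _ (sum_congr rfl fun i hi => ?_)
  rw [filter_Ioo_filter_lt (mem_Ioo.1 (mem_filter.1 hi).1).2]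
  ring

lemma add_sum_lexWeight_mul_le [Finite ι] {u θ z : ι → ℤ} {l : ι} (hl : ∀ k, k ≤ l)
    (hθu : ∀ k, θ k ≤ u k) (hz0 : ∀ k, 0 ≤ z k) (hzu : ∀ k, z k ≤ u k)
    (hlex : ∀ t, (∀ k, t < k → z k = θ k) → z t ≤ θ t) (hzl : z l = θ l) (j : ι) :
    z j + ∑ i ∈ (Ioo j l).filter (fun k => 1 ≤ θ k), lexWeight u θ j i * z i ≤
      θ j + ∑ i ∈ (Ioo j l).filter (fun k => 1 ≤ θ k), lexWeight u θ j i * θ i := by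
  suffices (z j - θ j) + ∑ i ∈ (Ioo j l).filter (fun k => 1 ≤ θ k),
      lexWeight u θ j i * (z i - θ i) ≤ 0 by
    simp only [mul_sub, sum_sub_distrib] at this
    linarith
  rcases forall_gt_eq_or_exists_max_ne z θ j with hagree | ⟨t, hjt, hne, habove⟩
  · rw [sum_eq_zero fun i hi => by rw [hagree i (mem_Ioo.1 (mem_filter.1 hi).1).1, sub_self,
      mul_zero]]
    linarith [hlex j hagree]
  · have htl : t < l := (hl t).lt_of_ne fun h => hne (h ▸ hzl)
    have hzt : z t + 1 ≤ θ t := (hlex t habove).lt_of_ne hne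
    have hsplit := sum_filter_Ioo_eq_add_of_eq_zero (P := fun k => 1 ≤ θ k)
      (f := fun i => lexWeight u θ j i * (z i - θ i)) hjt htl (by linarith [hz0 t])
      fun i hti => by rw [habove i hti, sub_self, mul_zero]
    have hhead : (z j - θ j) + ∑ i ∈ (Ioo j t).filter (fun k => 1 ≤ θ k),
        lexWeight u θ j i * (z i - θ i) ≤ lexWeight u θ j t := by
      rw [lexWeight_eq_add_sum u θ j t]
      gcongr with i
      · exact hzu j
      · exact lexWeight_nonneg hθu j i
      · exact hzu i
    have hlast : lexWeight u θ j t * (z t - θ t) ≤ lexWeight u θ j t * (-1) :=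
      mul_le_mul_of_nonneg_left (by linarith) (lexWeight_nonneg hθu j t)
    linarith

lemma packWeight_le_add_sum_mul [Finite ι] {u γ z : ι → ℤ} {l : ι} (hl : ∀ k, k ≤ l)
    (hγ0 : ∀ k, 0 ≤ γ k) (hz0 : ∀ k, 0 ≤ z k) (hzu : ∀ k, z k ≤ u k)
    (hlex : ∀ t, (∀ k, t < k → z k = γ k) → γ t ≤ z t) (hzl : z l = γ l) (j : ι) :
    packWeight u γ j l ≤
      z j + ∑ i ∈ (Ioo j l).filter (fun k => γ k + 1 ≤ u k), packWeight u γ j i * z i := by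
  have hA := add_sum_lexWeight_mul_le (u := u) (θ := u - γ) (z := u - z) hl
    (fun k => by simp [hγ0 k]) (fun k => by simp [hzu k]) (fun k => by simp [hz0 k])
    (fun t ht => by
      have := hlex t fun k hk => by simpa using ht k hk
      simp only [Pi.sub_apply]
      linarith)
    (by simp [hzl]) j
  have hT := lexWeight_eq_add_sum u (u - γ) j l
  rw [packWeight_eq_lexWeight, filter_congr (q := fun k => 1 ≤ (u - γ) k)
    fun k _ => by simp only [Pi.sub_apply]; omega]
  simp only [Pi.sub_apply, sub_sub_cancel, mul_sub, sum_sub_distrib] at hA hT ⊢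
  linarith

end LexWeight

section ConvexHull

variable {E : Type*} [AddCommGroup E] [Module ℝ E] {s : Set E} {x : E}

lemma LinearMap.le_of_mem_convexHull (f : E →ₗ[ℝ] ℝ) {β : ℝ} (h : ∀ z ∈ s, f z ≤ β)
    (hx : x ∈ convexHull ℝ s) : f x ≤ β :=
  convexHull_min h (convex_halfSpace_le f.isLinear β) hx

/-- The conclusion about `f` encodes `x = (1 - μ) • y + μ • y'` for some `y'` in the hull of `s`;
stated this way it also covers the case where `g = c` on all of `s`. -/
lemma exists_mix_of_mem_convexHull {g : E →ₗ[ℝ] ℝ} {c : ℝ}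
    (hs : ∀ z ∈ s, g z = c ∨ g z ≤ c - 1) (hx : x ∈ convexHull ℝ s) (hxc : c - 1 < g x) :
    ∃ μ, 0 ≤ μ ∧ μ ≤ c - g x ∧ ∃ y ∈ convexHull ℝ {z ∈ s | g z = c},
      ∀ (f : E →ₗ[ℝ] ℝ) (β : ℝ), (∀ z ∈ s, f z ≤ β) → f x ≤ (1 - μ) * f y + μ * β := by
  set T := {z ∈ s | g z = c}
  set R := {z ∈ s | g z ≠ c}
  have hsTR : s = T ∪ R := by
    ext z
    simp only [T, R, Set.mem_union, Set.mem_sep_iff]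
    tauto
  have hgT : ∀ z ∈ T, g z ≤ c := fun z hz => hz.2.le
  have hgR : ∀ z ∈ R, g z ≤ c - 1 := fun z hz => (hs z hz.1).resolve_left hz.2
  rw [hsTR] at hx
  rcases T.eq_empty_or_nonempty with hT | hT
  · rw [hT, Set.empty_union] at hx
    exact absurd (g.le_of_mem_convexHull hgR hx) hxc.not_ge
  rcases R.eq_empty_or_nonempty with hR | hR
  · rw [hR, Set.union_empty] at hx
    exact ⟨0, le_rfl, by linarith [g.le_of_mem_convexHull hgT hx], x, hx, fun f β _ => by simp⟩
  rw [convexHull_union hT hR] at hx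
  obtain ⟨y, hy, y', hy', hxy⟩ := mem_convexJoin.1 hx
  rw [segment_eq_image] at hxy
  obtain ⟨μ, ⟨hμ0, hμ1⟩, rfl⟩ := hxy
  have hmix : ∀ f : E →ₗ[ℝ] ℝ, f ((1 - μ) • y + μ • y') = (1 - μ) * f y + μ * f y' := fun f => by
    simp
  refine ⟨μ, hμ0, ?_, y, hy, fun f β hf => ?_⟩
  · have hgy := g.le_of_mem_convexHull hgT hy
    have hgy' := g.le_of_mem_convexHull hgR hy'
    rw [hmix]
    nlinarith
  · have hfy' := f.le_of_mem_convexHull (fun z hz => hf z (hsTR ▸ Or.inr hz)) hy'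
    rw [hmix]
    nlinarith

end ConvexHull

section Slice

variable {n : ℕ} {u : Fin n → ℤ} {S : Set (Fin n → ℤ)} {l : Fin n} {ε : ℝ} {x δ : Fin n → ℝ}

lemma sub_min_le_of_le_mix {X U y μ ε : ℝ} (hy0 : 0 ≤ y) (hyU : y ≤ U)
    (hX : X ≤ (1 - μ) * y + μ * U) (hμε : μ ≤ ε) (hε1 : ε ≤ 1) :
    X - min (ε * U) X ≤ (1 - ε) * y := by
  rcases le_total X (ε * U) with h | h
  · rw [min_eq_right h]
    nlinarith
  · rw [min_eq_left h]
    nlinarith [mul_nonneg (sub_nonneg.2 hμε) (sub_nonneg.2 hyU)]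

lemma mul_le_min_of_le_mix {X U y ν ε : ℝ} (hy0 : 0 ≤ y) (hyU : y ≤ U) (hX : ν * y ≤ X)
    (hεν : ε ≤ ν) (hε0 : 0 ≤ ε) : ε * y ≤ min (ε * U) X :=
  le_min (mul_le_mul_of_nonneg_left hyU hε0) (by nlinarith)

lemma toReal_image_subset_Icc (hS : ∀ z ∈ S, ∀ i, 0 ≤ z i ∧ z i ≤ u i) :
    toReal '' S ⊆ Set.Icc 0 (fun i => (u i : ℝ)) := by
  rintro _ ⟨z, hz, rfl⟩
  exact ⟨fun i => show (0 : ℝ) ≤ z i by exact_mod_cast (hS z hz i).1,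
    fun i => show (z i : ℝ) ≤ u i by exact_mod_cast (hS z hz i).2⟩

def weightedForm (j : Fin n) (F : Finset (Fin n)) (c : Fin n → ℝ) : (Fin n → ℝ) →ₗ[ℝ] ℝ :=
  LinearMap.proj (R := ℝ) (φ := fun _ => ℝ) j + ∑ i ∈ F, c i • LinearMap.proj i

lemma weightedForm_apply (j : Fin n) (F : Finset (Fin n)) (c y : Fin n → ℝ) :
    weightedForm j F c y = y j + ∑ i ∈ F, c i * y i := by
  simp [weightedForm]

lemma exists_slice_mix_of_lex_le {θ : Fin n → ℤ} (hl : ∀ k, k ≤ l) (hθu : ∀ k, θ k ≤ u k)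
    (hS : ∀ z ∈ S, (∀ i, 0 ≤ z i ∧ z i ≤ u i) ∧ ∀ t, (∀ k, t < k → z k = θ k) → z t ≤ θ t)
    (hε1 : ε < 1) (hx : x ∈ convexHull ℝ (toReal '' S)) (hxl : x l = θ l - ε) :
    ∃ μ y, 0 ≤ μ ∧ μ ≤ ε ∧ y ∈ Set.Icc 0 (fun i => (u i : ℝ)) ∧
      (∀ i, x i ≤ (1 - μ) * y i + μ * u i) ∧
      ∀ j, (y j - θ j) + ∑ i ∈ (Ioo j l).filter (fun k => 1 ≤ θ k),
        (lexWeight u θ j i : ℝ) * (y i - θ i) ≤ 0 := by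
  have hbox := toReal_image_subset_Icc fun z hz => (hS z hz).1
  have hlevel : ∀ w ∈ toReal '' S, LinearMap.proj (R := ℝ) l w = θ l ∨
      LinearMap.proj (R := ℝ) l w ≤ θ l - 1 := by
    rintro _ ⟨z, hz, rfl⟩
    have hzl := (hS z hz).2 l fun k hk => absurd (hl k) hk.not_ge
    simp only [LinearMap.proj_apply, toReal]
    rcases hzl.eq_or_lt with h | h
    · exact Or.inl (by exact_mod_cast h)
    · exact Or.inr (by exact_mod_cast Int.le_sub_one_of_lt h)
  obtain ⟨μ, hμ0, hμε, y, hy, hmix⟩ :=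
    exists_mix_of_mem_convexHull hlevel hx (by simp only [LinearMap.proj_apply, hxl]; linarith)
  simp only [LinearMap.proj_apply, hxl, sub_sub_cancel] at hμε
  refine ⟨μ, y, hμ0, hμε, convexHull_min (fun w hw => hbox hw.1) (convex_Icc _ _) hy,
    fun i => by simpa using hmix (LinearMap.proj i) (u i) fun w hw => (hbox hw).2 i,
    fun j => ?_⟩
  set F := (Ioo j l).filter (fun k => 1 ≤ θ k)
  set φ : Fin n → ℝ := fun i => lexWeight u θ j i
  have := (weightedForm j F φ).le_of_mem_convexHull (β := θ j + ∑ i ∈ F, φ i * θ i) ?_ hy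
  · rw [weightedForm_apply] at this
    simp only [mul_sub, sum_sub_distrib]
    linarith
  rintro _ ⟨⟨z, hz, rfl⟩, hzl⟩
  simp only [weightedForm_apply, LinearMap.proj_apply, toReal, φ] at hzl ⊢
  exact_mod_cast add_sum_lexWeight_mul_le hl hθu (fun i => ((hS z hz).1 i).1)
    (fun i => ((hS z hz).1 i).2) (hS z hz).2 (by exact_mod_cast hzl) j

lemma slice_lexWeight_le_zero {θ : Fin n → ℤ} (hl : ∀ k, k ≤ l) (hθu : ∀ k, θ k ≤ u k)
    (hS : ∀ z ∈ S, (∀ i, 0 ≤ z i ∧ z i ≤ u i) ∧ ∀ t, (∀ k, t < k → z k = θ k) → z t ≤ θ t)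
    (hε1 : ε < 1) (hx : x ∈ convexHull ℝ (toReal '' S)) (hxl : x l = θ l - ε) (j : Fin n)
    (hδ : ∀ i ∈ insert j ((Ioo j l).filter (fun k => 1 ≤ θ k)), δ i = min (ε * u i) (x i)) :
    x j - δ j - θ j * (1 - ε) + ∑ i ∈ (Ioo j l).filter (fun k => 1 ≤ θ k),
      (lexWeight u θ j i : ℝ) * (x i - δ i - θ i * (1 - ε)) ≤ 0 := by
  obtain ⟨μ, y, -, hμε, hyb, hxy, hylex⟩ := exists_slice_mix_of_lex_le hl hθu hS hε1 hx hxl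
  set F := (Ioo j l).filter (fun k => 1 ≤ θ k)
  set φ : Fin n → ℝ := fun i => lexWeight u θ j i
  have hterm : ∀ i ∈ insert j F, x i - δ i - θ i * (1 - ε) ≤ (1 - ε) * (y i - θ i) :=
    fun i hi => by
      rw [hδ i hi]
      linarith [sub_min_le_of_le_mix (hyb.1 i) (hyb.2 i) (hxy i) hμε hε1.le]
  calc _ ≤ (1 - ε) * (y j - θ j) + ∑ i ∈ F, φ i * ((1 - ε) * (y i - θ i)) := by
        gcongr with i hi
        · exact hterm j (mem_insert_self _ _)
        · exact (Int.cast_nonneg (lexWeight_nonneg hθu j i) : (0 : ℝ) ≤ _)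
        · exact hterm i (mem_insert_of_mem hi)
    _ = (1 - ε) * ((y j - θ j) + ∑ i ∈ F, φ i * (y i - θ i)) := by
        rw [mul_add, mul_sum]
        exact congrArg _ (sum_congr rfl fun i _ => by ring)
    _ ≤ 0 := mul_nonpos_of_nonneg_of_nonpos (by linarith) (hylex j)

lemma exists_slice_mix_of_le_lex {γ : Fin n → ℤ} (hl : ∀ k, k ≤ l) (hγ0 : ∀ k, 0 ≤ γ k)
    (hS : ∀ z ∈ S, (∀ i, 0 ≤ z i ∧ z i ≤ u i) ∧ ∀ t, (∀ k, t < k → z k = γ k) → γ t ≤ z t)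
    (hε0 : 0 < ε) (hx : x ∈ convexHull ℝ (toReal '' S)) (hxl : x l = γ l + 1 - ε) :
    ∃ ν y, ε ≤ ν ∧ y ∈ Set.Icc 0 (fun i => (u i : ℝ)) ∧ (∀ i, ν * y i ≤ x i) ∧
      ∀ j, (packWeight u γ j l : ℝ) ≤
        y j + ∑ i ∈ (Ioo j l).filter (fun k => γ k + 1 ≤ u k), (packWeight u γ j i : ℝ) * y i := by
  have hbox := toReal_image_subset_Icc fun z hz => (hS z hz).1
  have hlevel : ∀ w ∈ toReal '' S, (-LinearMap.proj (R := ℝ) l) w = -γ l ∨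
      (-LinearMap.proj (R := ℝ) l) w ≤ -γ l - 1 := by
    rintro _ ⟨z, hz, rfl⟩
    have hzl := (hS z hz).2 l fun k hk => absurd (hl k) hk.not_ge
    simp only [LinearMap.neg_apply, LinearMap.proj_apply, toReal, neg_inj]
    rcases hzl.eq_or_lt with h | h
    · exact Or.inl (by exact_mod_cast h.symm)
    · exact Or.inr (by linarith [show (γ l : ℝ) + 1 ≤ z l by exact_mod_cast h])
  obtain ⟨μ, -, hμε, y, hy, hmix⟩ := exists_mix_of_mem_convexHull hlevel hx
    (by simp only [LinearMap.neg_apply, LinearMap.proj_apply, hxl]; linarith)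
  simp only [LinearMap.neg_apply, LinearMap.proj_apply, hxl] at hμε
  refine ⟨1 - μ, y, by linarith, convexHull_min (fun w hw => hbox hw.1) (convex_Icc _ _) hy,
    fun i => ?_, fun j => ?_⟩
  · have := hmix (-LinearMap.proj i) 0 fun w hw => by simpa using (hbox hw).1 i
    simp only [LinearMap.neg_apply, LinearMap.proj_apply, mul_zero, add_zero] at this
    linarith
  set F := (Ioo j l).filter (fun k => γ k + 1 ≤ u k)
  set Φ : Fin n → ℝ := fun i => packWeight u γ j i
  have := (-weightedForm j F Φ).le_of_mem_convexHull (β := -packWeight u γ j l) ?_ hy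
  · rw [LinearMap.neg_apply, weightedForm_apply] at this
    linarith
  rintro _ ⟨⟨z, hz, rfl⟩, hzl⟩
  simp only [LinearMap.neg_apply, weightedForm_apply, LinearMap.proj_apply, toReal, Φ,
    neg_inj, neg_le_neg_iff] at hzl ⊢
  exact_mod_cast packWeight_le_add_sum_mul hl hγ0 (fun i => ((hS z hz).1 i).1)
    (fun i => ((hS z hz).1 i).2) (hS z hz).2 (by exact_mod_cast hzl) j

lemma slice_packWeight_le {γ : Fin n → ℤ} (hl : ∀ k, k ≤ l) (hγ0 : ∀ k, 0 ≤ γ k)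
    (hS : ∀ z ∈ S, (∀ i, 0 ≤ z i ∧ z i ≤ u i) ∧ ∀ t, (∀ k, t < k → z k = γ k) → γ t ≤ z t)
    (hε0 : 0 < ε) (hx : x ∈ convexHull ℝ (toReal '' S)) (hxl : x l = γ l + 1 - ε) (j : Fin n)
    (hδ : ∀ i, min (ε * u i) (x i) ≤ δ i) :
    ε * packWeight u γ j l ≤ δ j + ∑ i ∈ (Ioo j l).filter (fun k => γ k + 1 ≤ u k),
      (packWeight u γ j i : ℝ) * δ i := by
  obtain ⟨ν, y, hεν, hyb, hxy, hylex⟩ := exists_slice_mix_of_le_lex hl hγ0 hS hε0 hx hxl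
  set F := (Ioo j l).filter (fun k => γ k + 1 ≤ u k)
  set Φ : Fin n → ℝ := fun i => packWeight u γ j i
  have hterm : ∀ i, ε * y i ≤ δ i := fun i =>
    (mul_le_min_of_le_mix (hyb.1 i) (hyb.2 i) (hxy i) hεν hε0.le).trans (hδ i)
  calc ε * packWeight u γ j l ≤ ε * (y j + ∑ i ∈ F, Φ i * y i) :=
        mul_le_mul_of_nonneg_left (hylex j) hε0.le
    _ = ε * y j + ∑ i ∈ F, Φ i * (ε * y i) := by
        rw [mul_add, mul_sum]
        exact congrArg _ (sum_congr rfl fun i _ => by ring)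
    _ ≤ δ j + ∑ i ∈ F, Φ i * δ i := by
        gcongr with i
        · exact hterm j
        · exact (Int.cast_nonneg (packWeight_nonneg hγ0 j i) : (0 : ℝ) ≤ _)
        · exact hterm i

end Slice

section Truncation

variable {ι : Type*} [LinearOrder ι]

def IsTruncation (u θ : ι → ℤ) (l : ι) (ε : ℝ) (x δ : ι → ℝ) : Prop :=
  (∃ m, m < l ∧ 1 ≤ θ m ∧ (∀ k, k < l → 1 ≤ θ k → k ≤ m) ∧
      (∀ i, i ≤ m → δ i = min (ε * (u i : ℝ)) (x i)) ∧ (∀ i, m < i → δ i = x i)) ∨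
    ((∀ k, k < l → θ k < 1) ∧ ∀ i, δ i = x i)

variable {u θ : ι → ℤ} {l : ι} {ε : ℝ} {x δ : ι → ℝ}

lemma IsTruncation.min_le (h : IsTruncation u θ l ε x δ) (i : ι) :
    min (ε * u i) (x i) ≤ δ i := by
  rcases h with ⟨m, -, -, -, hle, hgt⟩ | ⟨-, heq⟩
  · rcases le_or_gt i m with him | hmi
    · exact (hle i him).ge
    · exact (hgt i hmi).symm ▸ min_le_right _ _
  · exact (heq i).symm ▸ min_le_right _ _

lemma IsTruncation.eq_min_or_filter_eq_empty [LocallyFiniteOrder ι] (h : IsTruncation u θ l ε x δ)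
    (j : ι) :
    (∀ i ∈ insert j ((Ioo j l).filter (fun k => 1 ≤ θ k)), δ i = min (ε * u i) (x i)) ∨
      ((Ioo j l).filter (fun k => 1 ≤ θ k) = ∅ ∧ δ j = x j) := by
  rcases h with ⟨m, -, -, hmax, hle, hgt⟩ | ⟨hθ, heq⟩
  · rcases le_or_gt j m with hjm | hmj
    · refine Or.inl fun i hi => hle i ?_
      rcases mem_insert.1 hi with rfl | hi
      · exact hjm
      · obtain ⟨hi, hθi⟩ := mem_filter.1 hi
        exact hmax i (mem_Ioo.1 hi).2 hθi
    · refine Or.inr ⟨filter_eq_empty_iff.2 fun i hi hθi => ?_, hgt j hmj⟩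
      exact (hmj.trans (mem_Ioo.1 hi).1).not_ge (hmax i (mem_Ioo.1 hi).2 hθi)
  · exact Or.inr ⟨filter_eq_empty_iff.2 fun i hi hθi => (hθ i (mem_Ioo.1 hi).2).not_ge hθi,
      heq j⟩

end Truncation

theorem stmt_18_general {n : ℕ}
    (a w u : Fin n → ℤ)
    (ha : ∀ i, 0 < a i) (hw : ∀ i, 0 < w i) (hu : ∀ i, 1 ≤ u i)
    (b d : ℤ) (hb : 0 < b)
    (θ : Fin n → ℤ)
    (hθ : ∀ i : Fin n,
      θ i = min (u i) ((b - ∑ k ∈ Finset.Ioi i, a k * θ k).fdiv (a i)))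
    (γ : Fin n → ℤ)
    (hγ : ∀ i : Fin n, γ i = u i - min (u i)
      (((∑ k, w k * u k) - d - ∑ k ∈ Finset.Ioi i, w k * (u k - γ k)).fdiv (w i)))
    (lst : Fin n) (hlst : (lst : ℕ) = n - 1)
    (h2 : γ lst = θ lst - 1)
    (φ : Fin n → Fin n → ℤ)
    (hφ : ∀ j i : Fin n, φ j i =
      (u j - θ j) * ∏ k ∈ (Finset.Ioo j i).filter (fun k => 1 ≤ θ k), (u k + 1 - θ k))
    (Φ : Fin n → Fin n → ℤ)
    (hΦ : ∀ j i : Fin n, Φ j i =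
      γ j * ∏ k ∈ (Finset.Ioo j i).filter (fun k => γ k + 1 ≤ u k), (γ k + 1))
    (ε : ℝ) (hε0 : 0 < ε) (hε1 : ε < 1)
    (x : Fin n → ℝ)
    (hxn : x lst = (θ lst : ℝ) - ε)
    (δ : Fin n → ℝ)
    (hδ : (∃ m : Fin n, m < lst ∧ 1 ≤ θ m ∧ (∀ k, k < lst → 1 ≤ θ k → k ≤ m) ∧
            (∀ i, i ≤ m → δ i = min (ε * (u i : ℝ)) (x i)) ∧
            (∀ i, m < i → δ i = x i)) ∨
          ((∀ k, k < lst → θ k < 1) ∧ ∀ i, δ i = x i)) :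
    ∀ j : Fin n, j < lst →
      (x ∈ convexHull ℝ (toReal ''
          {z : Fin n → ℤ | (∀ i, 0 ≤ z i ∧ z i ≤ u i) ∧ ∑ i, a i * z i ≤ b}) →
        x j - δ j - (θ j : ℝ) * (1 - ε) +
          ∑ i ∈ (Finset.Ioo j lst).filter (fun i => 1 ≤ θ i),
            (φ j i : ℝ) * (x i - δ i - (θ i : ℝ) * (1 - ε)) ≤ 0) ∧
      (x ∈ convexHull ℝ (toReal ''
          {z : Fin n → ℤ | (∀ i, 0 ≤ z i ∧ z i ≤ u i) ∧ d ≤ ∑ i, w i * z i}) →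
        ε * (Φ j lst : ℝ) ≤
          δ j + ∑ i ∈ (Finset.Ioo j lst).filter (fun i => γ i + 1 ≤ u i),
            (Φ j i : ℝ) * δ i) := by
  have hl : ∀ k, k ≤ lst := fun k => Fin.le_def.2 (by omega)
  have hθu : ∀ i, θ i ≤ u i := fun i => (hθ i).trans_le (min_le_left _ _)
  have hγ0 : ∀ i, 0 ≤ γ i := fun i => by
    rw [hγ i]
    exact sub_nonneg.2 (min_le_left _ _)
  have hθ : IsGreedy a u b θ := hθ
  have hγ : IsMinPacking w u d γ := hγ
  have hδ : IsTruncation u θ lst ε x δ := hδ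
  obtain rfl : φ = lexWeight u θ := funext₂ hφ
  obtain rfl : Φ = packWeight u γ := funext₂ hΦ
  intro j _
  refine ⟨fun hx => ?_, fun hx => ?_⟩
  · rcases hδ.eq_min_or_filter_eq_empty j with hδF | ⟨hF, hδj⟩
    · exact slice_lexWeight_le_zero hl hθu (fun z hz => ⟨hz.1, fun t =>
        hθ.le_of_forall_gt_eq ha (fun i => (hz.1 i).1) (fun i => (hz.1 i).2) hz.2⟩)
        hε1 hx hxn j hδF
    · have hθj : (0 : ℝ) ≤ θ j := by
        exact_mod_cast hθ.nonneg ha hb.le (fun i => by linarith [hu i]) j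
      rw [hF, sum_empty, hδj]
      nlinarith
  · exact slice_packWeight_le hl hγ0 (fun z hz => ⟨hz.1, fun t =>
      hγ.le_of_forall_gt_eq hw (fun i => (hz.1 i).1) (fun i => (hz.1 i).2) hz.2⟩)
      hε0 hx (by rw [hxn, h2]; push_cast; ring) j hδ.min_le

/-- the slice lemma.  In the two-knapsack setting with `γ_n = θ_n − 1`,
let `ε ∈ (0,1)`, let `x ∈ [0,u]` with `x_n = θ_n − ε`, and let `δ` be given by
`δ_i = min(ε·u_i, x_i)` for `i ≤ m` and `δ_i = x_i` for `i > m`, where `m` is the largest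
element of `I = {i : θ_i ≥ 1}` below the last index (if it exists, else `δ = x`).
Then the two families of inequalities (1) and (2) hold for every `j ∈ {1,…,n−1}`.
`lst` denotes the last index (index `n` of the paper). -/
theorem stmt_18 {n : ℕ} (hn : 1 ≤ n)
    (a w u : Fin n → ℤ)
    (ha : ∀ i, 0 < a i) (hw : ∀ i, 0 < w i) (hu : ∀ i, 1 ≤ u i)
    (hsia : ∀ i j : Fin n, (j : ℕ) = (i : ℕ) + 1 →
      ∑ k ∈ Finset.Iic i, a k * u k ≤ a j)
    (hsiw : ∀ i j : Fin n, (j : ℕ) = (i : ℕ) + 1 →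
      ∑ k ∈ Finset.Iic i, w k * u k ≤ w j)
    (b d : ℤ) (hb : 0 < b) (hd : 0 < d)
    (hub : ∀ i, a i * u i ≤ b) (hdle : d ≤ ∑ i, w i * u i)
    (θ : Fin n → ℤ)
    (hθ : ∀ i : Fin n,
      θ i = min (u i) ((b - ∑ k ∈ Finset.Ioi i, a k * θ k).fdiv (a i)))
    (γ : Fin n → ℤ)
    (hγ : ∀ i : Fin n, γ i = u i - min (u i)
      (((∑ k, w k * u k) - d - ∑ k ∈ Finset.Ioi i, w k * (u k - γ k)).fdiv (w i)))
    (lst : Fin n) (hlst : (lst : ℕ) = n - 1)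
    (h1 : d ≤ ∑ i ∈ Finset.Iio lst, w i * u i + (θ lst - 1) * w lst)
    (h2 : γ lst = θ lst - 1)
    (φ : Fin n → Fin n → ℤ)
    (hφ : ∀ j i : Fin n, φ j i =
      (u j - θ j) * ∏ k ∈ (Finset.Ioo j i).filter (fun k => 1 ≤ θ k), (u k + 1 - θ k))
    (Φ : Fin n → Fin n → ℤ)
    (hΦ : ∀ j i : Fin n, Φ j i =
      γ j * ∏ k ∈ (Finset.Ioo j i).filter (fun k => γ k + 1 ≤ u k), (γ k + 1))
    (ε : ℝ) (hε0 : 0 < ε) (hε1 : ε < 1)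
    (x : Fin n → ℝ) (hx : ∀ i, 0 ≤ x i ∧ x i ≤ (u i : ℝ))
    (hxn : x lst = (θ lst : ℝ) - ε)
    (δ : Fin n → ℝ)
    (hδ : (∃ m : Fin n, m < lst ∧ 1 ≤ θ m ∧ (∀ k, k < lst → 1 ≤ θ k → k ≤ m) ∧
            (∀ i, i ≤ m → δ i = min (ε * (u i : ℝ)) (x i)) ∧
            (∀ i, m < i → δ i = x i)) ∨
          ((∀ k, k < lst → θ k < 1) ∧ ∀ i, δ i = x i)) :
    ∀ j : Fin n, j < lst →
      (x ∈ convexHull ℝ (toReal ''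
          {z : Fin n → ℤ | (∀ i, 0 ≤ z i ∧ z i ≤ u i) ∧ ∑ i, a i * z i ≤ b}) →
        x j - δ j - (θ j : ℝ) * (1 - ε) +
          ∑ i ∈ (Finset.Ioo j lst).filter (fun i => 1 ≤ θ i),
            (φ j i : ℝ) * (x i - δ i - (θ i : ℝ) * (1 - ε)) ≤ 0) ∧
      (x ∈ convexHull ℝ (toReal ''
          {z : Fin n → ℤ | (∀ i, 0 ≤ z i ∧ z i ≤ u i) ∧ d ≤ ∑ i, w i * z i}) →
        ε * (Φ j lst : ℝ) ≤
          δ j + ∑ i ∈ (Finset.Ioo j lst).filter (fun i => γ i + 1 ≤ u i),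
            (Φ j i : ℝ) * δ i) :=
  stmt_18_general a w u ha hw hu b d hb θ hθ γ hγ lst hlst h2 φ hφ Φ hΦ ε hε0 hε1 x hxn δ hδ
end
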